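/- arXiv:hep-th/9404038 — 3 statements merged into one kernel-verified Lean document; each statement's English description precedes it below -/
import Mathlib

section
/- Let q, a, b be nonzero complex numbers with |q| > 1, and let z be a complex number with |z| · max(|ab|, |ab|^{−1}, |a b^{−1}|, |a^{−1} b|) < |q|^2. Then the series Σ_{n≥1} (z^n/n) (a^n − a^{−n})(b^n − b^{−n})/(q^{2n} − q^{−2n}) converges absolutely and exp( Σ_{n≥1} (z^n/n) (a^n − a^{−n})(b^n − b^{−n})/(q^{2n} − q^{−2n}) ) = ∏_{k=0}^{∞} (1 − z a b^{−1} q^{−2−4k})(1 − z a^{−1} b q^{−2−4k}) / ( (1 − z a b q^{−2−4k})(1 − z a^{−1} b^{−1} q^{−2−4k}) ). (With a = q^λ, b = q^μ this identifies the scalar factor f_{λ,μ}(z) = exp( Σ_{n≥1} (q − q^{−1}) [λn]_q [μn]_q/[2n]_q · z^n/n ) of the trigonometric R-matrix with the ratio of infinite q-Pochhammer products (z q^{λ−μ−2}; q^{−4})_∞ (z q^{μ−λ−2}; q^{−4})_∞ / ( (z q^{λ+μ−2}; q^{−4})_∞ (z q^{−λ−μ−2}; q^{−4})_∞ ).) 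-/
/-!
Writing `(a^n − a^{−n})(b^n − b^{−n})` as a signed sum of the four powers `(a^{±1} b^{±1})^n` and
expanding `1/(q^{2n} − q^{−2n}) = Σ_{k≥0} q^{−2n−4kn}`, the exponent becomes a signed sum of four
absolutely convergent double series `Σ_{n,k} (c q^{−2−4k})^n / n`. Summing over `n` first gives
`−log(1 − c q^{−2−4k})`, so each double series is the logarithm of one q-Pochhammer product
`(c q^{−2}; q^{−4})_∞^{−1}`.
-/

open Complex

noncomputable def logQPochhammerTerm {K : Type*} [Field K] (x w : K) (n : ℕ) : K :=
  x ^ (n + 1) / ((n : K) + 1) / (1 - w ^ (n + 1))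

section

variable {x w : ℂ}

theorem summable_pow_mul_pow_div (hx : ‖x‖ < 1) (hw : ‖w‖ < 1) :
    Summable fun p : ℕ × ℕ => (x * w ^ p.2) ^ (p.1 + 1) / ((p.1 : ℂ) + 1) := by
  have hgeo : Summable fun p : ℕ × ℕ => ‖x‖ ^ (p.1 + 1) * ‖w‖ ^ p.2 :=
    ((summable_nat_add_iff 1).mpr (summable_geometric_of_lt_one (norm_nonneg x) hx)).mul_of_nonneg
      (summable_geometric_of_lt_one (norm_nonneg w) hw) (fun _ => by positivity)
      (fun _ => by positivity)
  refine Summable.of_norm_bounded hgeo fun ⟨n, k⟩ => ?_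
  have hn : (1 : ℝ) ≤ ‖(n : ℂ) + 1‖ := by norm_cast; simp
  calc ‖(x * w ^ k) ^ (n + 1) / ((n : ℂ) + 1)‖ ≤ ‖x‖ ^ (n + 1) * (‖w‖ ^ k) ^ (n + 1) := by
        rw [norm_div, norm_pow, norm_mul, norm_pow, mul_pow]
        exact div_le_self (by positivity) hn
    _ ≤ ‖x‖ ^ (n + 1) * ‖w‖ ^ k := by
        gcongr
        exact pow_le_of_le_one (by positivity) (pow_le_one₀ (norm_nonneg w) hw.le) n.succ_ne_zero

theorem norm_mul_pow_lt_one (hx : ‖x‖ < 1) (hw : ‖w‖ < 1) (k : ℕ) : ‖x * w ^ k‖ < 1 := by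
  rw [norm_mul, norm_pow]
  exact mul_lt_one_of_nonneg_of_lt_one_left (norm_nonneg x) hx (pow_le_one₀ (norm_nonneg w) hw.le)

theorem hasSum_logQPochhammerTerm (hx : ‖x‖ < 1) (hw : ‖w‖ < 1) :
    HasSum (logQPochhammerTerm x w)
      (∑' p : ℕ × ℕ, (x * w ^ p.2) ^ (p.1 + 1) / ((p.1 : ℂ) + 1)) := by
  refine (summable_pow_mul_pow_div hx hw).hasSum.prod_fiberwise fun n => ?_
  have hwn : ‖w ^ (n + 1)‖ < 1 := by
    rw [norm_pow]; exact pow_lt_one₀ (norm_nonneg w) hw n.succ_ne_zero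
  rw [logQPochhammerTerm, div_eq_mul_inv _ (1 - w ^ (n + 1))]
  exact ((hasSum_geometric_of_norm_lt_one hwn).mul_left _).congr_fun fun k => by ring

theorem hasSum_neg_log_one_sub_mul_pow (hx : ‖x‖ < 1) (hw : ‖w‖ < 1) :
    HasSum (fun k => -log (1 - x * w ^ k)) (∑' n, logQPochhammerTerm x w n) := by
  rw [(hasSum_logQPochhammerTerm hx hw).tsum_eq]
  have hswap : HasSum (fun p : ℕ × ℕ => (x * w ^ p.1) ^ (p.2 + 1) / ((p.2 : ℂ) + 1))
      (∑' p : ℕ × ℕ, (x * w ^ p.2) ^ (p.1 + 1) / ((p.1 : ℂ) + 1)) :=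
    (Equiv.prodComm ℕ ℕ).hasSum_iff.mpr (summable_pow_mul_pow_div hx hw).hasSum
  have hfib : ∀ k : ℕ, HasSum (fun n : ℕ => (x * w ^ k) ^ (n + 1) / ((n : ℂ) + 1))
      (-log (1 - x * w ^ k)) := fun k => hasSum_taylorSeries_neg_log' (norm_mul_pow_lt_one hx hw k)
  exact hswap.prod_fiberwise hfib

theorem one_sub_mul_pow_ne_zero (hx : ‖x‖ < 1) (hw : ‖w‖ < 1) (k : ℕ) : 1 - x * w ^ k ≠ 0 := by
  refine sub_ne_zero.mpr fun h => ?_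
  have := h ▸ norm_mul_pow_lt_one hx hw k
  simp at this

theorem hasProd_one_sub_mul_pow (hx : ‖x‖ < 1) (hw : ‖w‖ < 1) :
    HasProd (fun k => 1 - x * w ^ k) (exp (-∑' n, logQPochhammerTerm x w n)) := by
  convert (hasSum_neg_log_one_sub_mul_pow hx hw).neg.cexp with k
  simp [exp_log (one_sub_mul_pow_ne_zero hx hw k)]

theorem hasProd_inv_one_sub_mul_pow (hx : ‖x‖ < 1) (hw : ‖w‖ < 1) :
    HasProd (fun k => (1 - x * w ^ k)⁻¹) (exp (∑' n, logQPochhammerTerm x w n)) := by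
  convert (hasSum_neg_log_one_sub_mul_pow hx hw).cexp with k
  simp [exp_neg, exp_log (one_sub_mul_pow_ne_zero hx hw k)]

theorem hasProd_qPochhammer_ratio {x₁ x₂ x₃ x₄ : ℂ} (h₁ : ‖x₁‖ < 1) (h₂ : ‖x₂‖ < 1)
    (h₃ : ‖x₃‖ < 1) (h₄ : ‖x₄‖ < 1) (hw : ‖w‖ < 1) :
    HasProd (fun k => (1 - x₂ * w ^ k) * (1 - x₃ * w ^ k) / ((1 - x₁ * w ^ k) * (1 - x₄ * w ^ k)))
      (exp (∑' n, logQPochhammerTerm x₁ w n - ∑' n, logQPochhammerTerm x₂ w n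
        - ∑' n, logQPochhammerTerm x₃ w n + ∑' n, logQPochhammerTerm x₄ w n)) := by
  convert ((hasProd_one_sub_mul_pow h₂ hw).mul (hasProd_one_sub_mul_pow h₃ hw)).mul
    ((hasProd_inv_one_sub_mul_pow h₁ hw).mul (hasProd_inv_one_sub_mul_pow h₄ hw)) using 1
  · ext k
    rw [div_eq_mul_inv, mul_inv]
  · simp only [exp_add, exp_sub, exp_neg]
    ring

end

noncomputable def scalarFactorSeriesTerm {K : Type*} [Field K] (q a b z : K) (n : ℕ) : K :=
  z ^ (n + 1) / ((n : K) + 1) *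
    ((a ^ ((n : ℤ) + 1) - a ^ (-((n : ℤ) + 1))) * (b ^ ((n : ℤ) + 1) - b ^ (-((n : ℤ) + 1))) /
      (q ^ (2 * ((n : ℤ) + 1)) - q ^ (-2 * ((n : ℤ) + 1))))

noncomputable def scalarFactorProductTerm {K : Type*} [Field K] (q a b z : K) (k : ℕ) : K :=
  (1 - z * a * b⁻¹ * q ^ (-2 - 4 * (k : ℤ))) * (1 - z * a⁻¹ * b * q ^ (-2 - 4 * (k : ℤ))) /
    ((1 - z * a * b * q ^ (-2 - 4 * (k : ℤ))) * (1 - z * a⁻¹ * b⁻¹ * q ^ (-2 - 4 * (k : ℤ))))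

theorem scalarFactorSeriesTerm_eq {K : Type*} [Field K] {q : K} (a b z : K) (hq : q ≠ 0)
    {n : ℕ} (hq4 : q ^ (4 * (n + 1)) ≠ 1) :
    scalarFactorSeriesTerm q a b z n =
      logQPochhammerTerm (z * (a * b) * q ^ (-2 : ℤ)) (q ^ (-4 : ℤ)) n
        - logQPochhammerTerm (z * (a * b⁻¹) * q ^ (-2 : ℤ)) (q ^ (-4 : ℤ)) n
        - logQPochhammerTerm (z * (a⁻¹ * b) * q ^ (-2 : ℤ)) (q ^ (-4 : ℤ)) n
        + logQPochhammerTerm (z * (a * b)⁻¹ * q ^ (-2 : ℤ)) (q ^ (-4 : ℤ)) n := by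
  have e1 : ((n : ℤ) + 1) = ((n + 1 : ℕ) : ℤ) := by push_cast; ring
  have e2 : (2 * ((n : ℤ) + 1)) = ((2 * (n + 1) : ℕ) : ℤ) := by push_cast; ring
  have e3 : (-2 * ((n : ℤ) + 1)) = -((2 * (n + 1) : ℕ) : ℤ) := by push_cast; ring
  rw [scalarFactorSeriesTerm, e2, e3, e1]
  simp only [logQPochhammerTerm, zpow_neg, zpow_natCast, mul_pow, inv_pow]
  have : q ^ (4 * (n + 1)) - 1 ≠ 0 := sub_ne_zero.mpr hq4
  field_simp
  ring

theorem zpow_neg_two_sub_four_mul {G : Type*} [GroupWithZero G] {q : G} (hq : q ≠ 0) (k : ℕ) :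
    q ^ (-2 - 4 * (k : ℤ)) = q ^ (-2 : ℤ) * (q ^ (-4 : ℤ)) ^ k := by
  rw [← zpow_natCast, ← zpow_mul, ← zpow_add₀ hq]
  ring_nf

theorem scalarFactorProductTerm_eq {K : Type*} [Field K] {q : K} (a b z : K) (hq : q ≠ 0)
    (k : ℕ) :
    scalarFactorProductTerm q a b z k =
      (1 - z * (a * b⁻¹) * q ^ (-2 : ℤ) * (q ^ (-4 : ℤ)) ^ k) *
          (1 - z * (a⁻¹ * b) * q ^ (-2 : ℤ) * (q ^ (-4 : ℤ)) ^ k) /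
        ((1 - z * (a * b) * q ^ (-2 : ℤ) * (q ^ (-4 : ℤ)) ^ k) *
          (1 - z * (a * b)⁻¹ * q ^ (-2 : ℤ) * (q ^ (-4 : ℤ)) ^ k)) := by
  simp only [scalarFactorProductTerm, zpow_neg_two_sub_four_mul hq, mul_inv]
  ring

theorem norm_mul_zpow_neg_two_lt_one {y q : ℂ} (hy : ‖y‖ < ‖q‖ ^ 2) : ‖y * q ^ (-2 : ℤ)‖ < 1 := by
  have hq : 0 < ‖q‖ ^ 2 := (norm_nonneg y).trans_lt hy
  rw [norm_mul, norm_zpow, zpow_neg, zpow_ofNat, mul_inv_lt_iff₀ hq, one_mul]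
  exact hy

theorem scalar_factor_pochhammer_general (q a b z : ℂ) (hq : 1 < ‖q‖)
    (hz : ‖z‖ * max (max ‖a * b‖ ‖(a * b)⁻¹‖) (max ‖a * b⁻¹‖ ‖a⁻¹ * b‖) < ‖q‖ ^ 2) :
    Summable (fun n : ℕ => ‖z ^ (n + 1) / ((n : ℂ) + 1) *
        ((a ^ ((n : ℤ) + 1) - a ^ (-((n : ℤ) + 1))) * (b ^ ((n : ℤ) + 1) - b ^ (-((n : ℤ) + 1))) /
          (q ^ (2 * ((n : ℤ) + 1)) - q ^ (-2 * ((n : ℤ) + 1))))‖) ∧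
    Multipliable (fun k : ℕ =>
        (1 - z * a * b⁻¹ * q ^ (-2 - 4 * (k : ℤ))) * (1 - z * a⁻¹ * b * q ^ (-2 - 4 * (k : ℤ))) /
          ((1 - z * a * b * q ^ (-2 - 4 * (k : ℤ))) *
            (1 - z * a⁻¹ * b⁻¹ * q ^ (-2 - 4 * (k : ℤ))))) ∧
    Complex.exp (∑' n : ℕ, z ^ (n + 1) / ((n : ℂ) + 1) *
        ((a ^ ((n : ℤ) + 1) - a ^ (-((n : ℤ) + 1))) * (b ^ ((n : ℤ) + 1) - b ^ (-((n : ℤ) + 1))) /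
          (q ^ (2 * ((n : ℤ) + 1)) - q ^ (-2 * ((n : ℤ) + 1)))))
      = ∏' k : ℕ,
          (1 - z * a * b⁻¹ * q ^ (-2 - 4 * (k : ℤ))) * (1 - z * a⁻¹ * b * q ^ (-2 - 4 * (k : ℤ))) /
            ((1 - z * a * b * q ^ (-2 - 4 * (k : ℤ))) *
              (1 - z * a⁻¹ * b⁻¹ * q ^ (-2 - 4 * (k : ℤ)))) := by
  have hq0 : q ≠ 0 := norm_pos_iff.mp (one_pos.trans hq)
  have hw : ‖q ^ (-4 : ℤ)‖ < 1 := by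
    rw [norm_zpow]; exact zpow_lt_one_of_neg₀ hq (by norm_num)
  have hx : ∀ c : ℂ, ‖c‖ ≤ max (max ‖a * b‖ ‖(a * b)⁻¹‖) (max ‖a * b⁻¹‖ ‖a⁻¹ * b‖) →
      ‖z * c * q ^ (-2 : ℤ)‖ < 1 := fun c hc =>
    norm_mul_zpow_neg_two_lt_one ((norm_mul_le_of_le le_rfl hc).trans_lt hz)
  have h₁ := hx (a * b) (le_max_of_le_left (le_max_left _ _))
  have h₂ := hx (a * b⁻¹) (le_max_of_le_right (le_max_left _ _))
  have h₃ := hx (a⁻¹ * b) (le_max_of_le_right (le_max_right _ _))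
  have h₄ := hx (a * b)⁻¹ (le_max_of_le_left (le_max_right _ _))
  have hpow (n : ℕ) : q ^ (4 * (n + 1)) ≠ 1 := fun h =>
    (one_lt_pow₀ hq (by positivity : 4 * (n + 1) ≠ 0)).ne' (by rw [← norm_pow, h, norm_one])
  set L : ℂ → ℂ := fun c => ∑' n, logQPochhammerTerm (z * c * q ^ (-2 : ℤ)) (q ^ (-4 : ℤ)) n
  have hL {c : ℂ} (hc : ‖z * c * q ^ (-2 : ℤ)‖ < 1) :
      HasSum (logQPochhammerTerm (z * c * q ^ (-2 : ℤ)) (q ^ (-4 : ℤ))) (L c) :=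
    (hasSum_logQPochhammerTerm hc hw).summable.hasSum
  have hsum : HasSum (scalarFactorSeriesTerm q a b z)
      (L (a * b) - L (a * b⁻¹) - L (a⁻¹ * b) + L (a * b)⁻¹) :=
    ((((hL h₁).sub (hL h₂)).sub (hL h₃)).add (hL h₄)).congr_fun
      fun n => scalarFactorSeriesTerm_eq a b z hq0 (hpow n)
  have hprod : HasProd (scalarFactorProductTerm q a b z)
      (exp (L (a * b) - L (a * b⁻¹) - L (a⁻¹ * b) + L (a * b)⁻¹)) :=
    (hasProd_qPochhammer_ratio h₁ h₂ h₃ h₄ hw).congr_fun (scalarFactorProductTerm_eq a b z hq0)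
  exact ⟨summable_norm_iff.mpr hsum.summable, hprod.multipliable,
    (congrArg exp hsum.tsum_eq).trans hprod.tprod_eq.symm⟩

/-- The scalar factor of the trigonometric R-matrix as a ratio of q-Pochhammer
products: for `|q| > 1` and `z` small enough,
`exp( Σ_{n≥1} (z^n/n) (a^n − a^{−n})(b^n − b^{−n})/(q^{2n} − q^{−2n}) )
 = ∏_{k≥0} (1 − z a b^{−1} q^{−2−4k})(1 − z a^{−1} b q^{−2−4k})
          / ( (1 − z a b q^{−2−4k})(1 − z a^{−1} b^{−1} q^{−2−4k}) )`,
the series converging absolutely and the product converging.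
With `a = q^λ`, `b = q^μ` this identifies
`f_{λ,μ}(z) = exp( Σ_{n≥1} (q − q^{−1}) [λn]_q [μn]_q/[2n]_q · z^n/n )` with
`(z q^{λ−μ−2}; q^{−4})_∞ (z q^{μ−λ−2}; q^{−4})_∞ /
 ((z q^{λ+μ−2}; q^{−4})_∞ (z q^{−λ−μ−2}; q^{−4})_∞)`. -/
theorem scalar_factor_pochhammer (q a b z : ℂ) (hq0 : q ≠ 0) (ha : a ≠ 0)
    (hb : b ≠ 0) (hq : 1 < ‖q‖)
    (hz : ‖z‖ * max (max ‖a * b‖ ‖(a * b)⁻¹‖) (max ‖a * b⁻¹‖ ‖a⁻¹ * b‖) < ‖q‖ ^ 2) :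
    Summable (fun n : ℕ => ‖z ^ (n + 1) / ((n : ℂ) + 1) *
        ((a ^ ((n : ℤ) + 1) - a ^ (-((n : ℤ) + 1))) * (b ^ ((n : ℤ) + 1) - b ^ (-((n : ℤ) + 1))) /
          (q ^ (2 * ((n : ℤ) + 1)) - q ^ (-2 * ((n : ℤ) + 1))))‖) ∧
    Multipliable (fun k : ℕ =>
        (1 - z * a * b⁻¹ * q ^ (-2 - 4 * (k : ℤ))) * (1 - z * a⁻¹ * b * q ^ (-2 - 4 * (k : ℤ))) /
          ((1 - z * a * b * q ^ (-2 - 4 * (k : ℤ))) *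
            (1 - z * a⁻¹ * b⁻¹ * q ^ (-2 - 4 * (k : ℤ))))) ∧
    Complex.exp (∑' n : ℕ, z ^ (n + 1) / ((n : ℂ) + 1) *
        ((a ^ ((n : ℤ) + 1) - a ^ (-((n : ℤ) + 1))) * (b ^ ((n : ℤ) + 1) - b ^ (-((n : ℤ) + 1))) /
          (q ^ (2 * ((n : ℤ) + 1)) - q ^ (-2 * ((n : ℤ) + 1)))))
      = ∏' k : ℕ,
          (1 - z * a * b⁻¹ * q ^ (-2 - 4 * (k : ℤ))) * (1 - z * a⁻¹ * b * q ^ (-2 - 4 * (k : ℤ))) /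
            ((1 - z * a * b * q ^ (-2 - 4 * (k : ℤ))) *
              (1 - z * a⁻¹ * b⁻¹ * q ^ (-2 - 4 * (k : ℤ)))) :=
  scalar_factor_pochhammer_general q a b z hq hz
end

section
/- Let F be a field, p ∈ F nonzero with (m)_p := 1 + p + ⋯ + p^{m−1} ≠ 0 for all m ≥ 1, let A be an associative unital F-algebra and x, y ∈ A elements satisfying y x = p^2 x y. Then in A[[z, ζ]] the following identity of formal power series holds: ∏_{n=0}^{∞,→} exp_p(ζ z^n y^n x) = Σ_{k=0}^{∞} (ζ^k/(k)_p!) x^k ∏_{j=1}^{k} (1 − p^{j+1} z y)^{−1}, where the left-hand product is taken left-to-right in increasing n, exp_p(T) := Σ_{m≥0} T^m/(m)_p! with (m)_p! := (1)_p ⋯ (m)_p, and (1 − p^{j+1} z y)^{−1} := Σ_{m≥0} p^{(j+1)m} z^m y^m. (This is the closed form of the upper-triangular Gauss factor R⁺ of the trigonometric R-matrix: the ordered product of q-exponentials over the real roots α + nδ collapses to a single q-exponential-type sum with rational-function coefficients.) -/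
noncomputable section

/-- The `p`-integer `(m)_p = 1 + p + ⋯ + p^{m−1}`. -/
def pnum {F : Type*} [Field F] (p : F) (m : ℕ) : F := ∑ r ∈ Finset.range m, p ^ r

/-- The `p`-factorial `(m)_p! = (1)_p (2)_p ⋯ (m)_p`. -/
def pfact {F : Type*} [Field F] (p : F) (m : ℕ) : F := ∏ i ∈ Finset.range m, pnum p (i + 1)

variable {F : Type*} [Field F] {A : Type*} [Ring A] [Algebra F A]

/-- The factor `exp_p(ζ z^n y^n x) = Σ_m (ζ z^n y^n x)^m/(m)_p!` as a formal
power series in `A[[z, ζ]]` (with `z = X 0`, `ζ = X 1`); the term with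
`T^m` has `ζ`-degree exactly `m`, so each coefficient picks a single term. -/
def qexpFactor (p : F) (x y : A) (n : ℕ) : MvPowerSeries (Fin 2) A :=
  fun d => MvPowerSeries.coeff (R := A) d
    ((pfact p (d 1))⁻¹ •
      ((MvPowerSeries.X (1 : Fin 2) * (MvPowerSeries.X (0 : Fin 2)) ^ n *
        MvPowerSeries.C (σ := Fin 2) (R := A) (y ^ n * x)) ^ (d 1)))

/-- The geometric series `(1 − p^j z y)^{−1} := Σ_m p^{j m} z^m y^m` in `A[[z, ζ]]`. -/
def geomInv (p : F) (y : A) (j : ℕ) : MvPowerSeries (Fin 2) A :=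
  fun d => if d 1 = 0 then (p ^ (j * d 0)) • y ^ (d 0) else 0

/-- The `k`-th summand `(ζ^k/(k)_p!) x^k ∏_{j=1}^{k} (1 − p^{j+1} z y)^{−1}`. -/
def rhsTermPlus (p : F) (x y : A) (k : ℕ) : MvPowerSeries (Fin 2) A :=
  (pfact p k)⁻¹ •
    ((MvPowerSeries.X (1 : Fin 2)) ^ k * MvPowerSeries.C (σ := Fin 2) (R := A) (x ^ k) *
      ((List.range k).map fun j => geomInv p y (j + 2)).prod)


namespace GaussAux
open MvPowerSeries Finset
def D (a k : ℕ) : Fin 2 →₀ ℕ := Finsupp.single 0 a + Finsupp.single 1 k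

@[simp] lemma D_apply0 (a k : ℕ) : D a k 0 = a := by
  simp [D, Finsupp.single_apply]
@[simp] lemma D_apply1 (a k : ℕ) : D a k 1 = k := by
  simp [D, Finsupp.single_apply]
lemma D_eta (u : Fin 2 →₀ ℕ) : D (u 0) (u 1) = u := by
  ext i
  fin_cases i <;> simp [D, Finsupp.single_apply]
lemma D_add (a k a' k' : ℕ) : D a k + D a' k' = D (a + a') (k + k') := by
  ext i; fin_cases i <;> simp
lemma D_eq_iff {a k a' k' : ℕ} : D a k = D a' k' ↔ a = a' ∧ k = k' := by
  constructor
  · intro h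
    constructor
    · have := congrArg (fun f => f 0) h; simpa using this
    · have := congrArg (fun f => f 1) h; simpa using this
  · rintro ⟨rfl, rfl⟩; rfl
lemma D_eq_zero {a k : ℕ} : D a k = 0 ↔ a = 0 ∧ k = 0 := by
  have : (0 : Fin 2 →₀ ℕ) = D 0 0 := by ext i; fin_cases i <;> simp
  rw [this, D_eq_iff]

def coeff2 (f : MvPowerSeries (Fin 2) A) (a k : ℕ) : A := MvPowerSeries.coeff (R := A) (D a k) f

lemma coeff2_apply (f : MvPowerSeries (Fin 2) A) (a k : ℕ) : coeff2 f a k = f (D a k) := rfl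

lemma coeff2_one (a k : ℕ) : coeff2 (1 : MvPowerSeries (Fin 2) A) a k
    = if a = 0 ∧ k = 0 then 1 else 0 := by
  rw [coeff2, MvPowerSeries.coeff_one]
  simp [D_eq_zero]

lemma coeff2_smul (c : F) (f : MvPowerSeries (Fin 2) A) (a k : ℕ) :
    coeff2 (c • f) a k = c • coeff2 f a k := rfl

lemma coeff2_mul (f g : MvPowerSeries (Fin 2) A) (a k : ℕ) :
    coeff2 (f * g) a k
      = ∑ q ∈ Finset.HasAntidiagonal.antidiagonal k, ∑ r ∈ Finset.HasAntidiagonal.antidiagonal a,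
          coeff2 f r.1 q.1 * coeff2 g r.2 q.2 := by
  rw [coeff2, MvPowerSeries.coeff_mul, ← Finset.sum_product']
  refine Finset.sum_nbij' (fun x => ((x.1 1, x.2 1), (x.1 0, x.2 0)))
    (fun y => (D y.2.1 y.1.1, D y.2.2 y.1.2)) ?_ ?_ ?_ ?_ ?_
  · intro x hx
    have hx' := Finset.HasAntidiagonal.mem_antidiagonal.mp hx
    simp only [Finset.mem_product, Finset.HasAntidiagonal.mem_antidiagonal]
    constructor
    · have := congrArg (fun f => f 1) hx'; simpa [D] using this
    · have := congrArg (fun f => f 0) hx'; simpa [D] using this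
  · intro y hy
    simp only [Finset.mem_product, Finset.HasAntidiagonal.mem_antidiagonal] at hy
    rw [Finset.HasAntidiagonal.mem_antidiagonal, D_add]
    rw [hy.1, hy.2]
  · intro x hx
    simp [D_eta]
  · intro y hy
    simp
  · intro x hx
    simp [coeff2, D_eta]

lemma sum_antidiag_fst {M : Type*} [AddCommMonoid M] (f : ℕ × ℕ → M) (c a : ℕ)
    (h : ∀ r ∈ Finset.HasAntidiagonal.antidiagonal a, r.1 ≠ c → f r = 0) :
    ∑ r ∈ Finset.HasAntidiagonal.antidiagonal a, f r = if c ≤ a then f (c, a - c) else 0 := by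
  by_cases hc : c ≤ a
  · rw [if_pos hc]
    refine Finset.sum_eq_single_of_mem _ ?_ ?_
    · rw [Finset.HasAntidiagonal.mem_antidiagonal]; omega
    · intro b hb hne
      refine h b hb ?_
      intro h1
      apply hne
      have := Finset.HasAntidiagonal.mem_antidiagonal.mp hb
      ext
      · exact h1
      · simp only; omega
  · rw [if_neg hc]
    refine Finset.sum_eq_zero ?_
    intro r hr
    refine h r hr ?_
    have := Finset.HasAntidiagonal.mem_antidiagonal.mp hr
    omega

lemma sum_antidiag_snd {M : Type*} [AddCommMonoid M] (f : ℕ × ℕ → M) (c a : ℕ)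
    (h : ∀ r ∈ Finset.HasAntidiagonal.antidiagonal a, r.2 ≠ c → f r = 0) :
    ∑ r ∈ Finset.HasAntidiagonal.antidiagonal a, f r = if c ≤ a then f (a - c, c) else 0 := by
  by_cases hc : c ≤ a
  · rw [if_pos hc]
    refine Finset.sum_eq_single_of_mem _ ?_ ?_
    · rw [Finset.HasAntidiagonal.mem_antidiagonal]; omega
    · intro b hb hne
      refine h b hb ?_
      intro h1
      apply hne
      have := Finset.HasAntidiagonal.mem_antidiagonal.mp hb
      ext
      · simp only; omega
      · exact h1
  · rw [if_neg hc]
    refine Finset.sum_eq_zero ?_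
    intro r hr
    refine h r hr ?_
    have := Finset.HasAntidiagonal.mem_antidiagonal.mp hr
    omega

lemma monomial_pow (e : Fin 2 →₀ ℕ) (b : A) (m : ℕ) :
    (MvPowerSeries.monomial (R := A) e b) ^ m = MvPowerSeries.monomial (R := A) (m • e) (b ^ m) := by
  induction m with
  | zero => simp [MvPowerSeries.monomial_zero_one]
  | succ m ih =>
      rw [pow_succ, ih, MvPowerSeries.monomial_mul_monomial, pow_succ, succ_nsmul]


section Qexp
variable (p : F) (x y : A)

lemma M_eq (n : ℕ) :
    MvPowerSeries.X (1 : Fin 2) * (MvPowerSeries.X (0 : Fin 2)) ^ n *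
        MvPowerSeries.C (σ := Fin 2) (R := A) (y ^ n * x)
      = MvPowerSeries.monomial (R := A) (D n 1) (y ^ n * x) := by
  rw [MvPowerSeries.X_pow_eq, MvPowerSeries.X, MvPowerSeries.monomial_mul_monomial]
  have : (MvPowerSeries.C (σ := Fin 2) (R := A)) (y ^ n * x)
      = MvPowerSeries.monomial (R := A) 0 (y ^ n * x) := rfl
  rw [this, MvPowerSeries.monomial_mul_monomial]
  simp only [add_zero, one_mul]
  have he : (Finsupp.single (1 : Fin 2) 1 + Finsupp.single (0 : Fin 2) n) = D n 1 := by
    ext i; fin_cases i <;> simp [D, Finsupp.single_apply]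
  rw [he]

lemma coeff2_qexp (n a k : ℕ) :
    coeff2 (qexpFactor p x y n) a k
      = if a = n * k then (pfact p k)⁻¹ • (y ^ n * x) ^ k else 0 := by
  rw [coeff2_apply, qexpFactor]
  simp only [D_apply1]
  rw [M_eq, monomial_pow]
  have hsm : k • D n 1 = D (n * k) k := by
    ext i; fin_cases i <;> simp [D, Finsupp.single_apply, mul_comm]
  rw [hsm]
  have hs : (MvPowerSeries.coeff (R := A) (D a k))
      ((pfact p k)⁻¹ • (MvPowerSeries.monomial (R := A) (D (n * k) k)) ((y ^ n * x) ^ k))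
      = (pfact p k)⁻¹ • (MvPowerSeries.coeff (R := A) (D a k))
          ((MvPowerSeries.monomial (R := A) (D (n * k) k)) ((y ^ n * x) ^ k)) := rfl
  rw [hs, MvPowerSeries.coeff_monomial]
  by_cases h : a = n * k
  · rw [if_pos (D_eq_iff.mpr ⟨h, rfl⟩), if_pos h]
  · rw [if_neg (fun hD => h (D_eq_iff.mp hD).1), if_neg h, smul_zero]

lemma coeff2_geomInv (j a k : ℕ) :
    coeff2 (geomInv p y j) a k = if k = 0 then (p ^ (j * a)) • y ^ a else 0 := by
  rw [coeff2_apply, geomInv]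
  simp

lemma coeff2_X1pow (k a m : ℕ) :
    coeff2 ((MvPowerSeries.X (1 : Fin 2) : MvPowerSeries (Fin 2) A) ^ k) a m
      = if a = 0 ∧ m = k then 1 else 0 := by
  rw [coeff2, MvPowerSeries.X_pow_eq, MvPowerSeries.coeff_monomial]
  have : (Finsupp.single (1 : Fin 2) k) = D 0 k := by
    ext i; fin_cases i <;> simp [D, Finsupp.single_apply]
  rw [this]
  by_cases h : a = 0 ∧ m = k
  · rw [if_pos (D_eq_iff.mpr h), if_pos h]
  · rw [if_neg, if_neg h]
    intro hD
    exact h (D_eq_iff.mp hD)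

end Qexp

section Scalar
variable {p : F}

lemma pfact_zero : pfact p 0 = 1 := by simp [pfact]
lemma pfact_succ (k : ℕ) : pfact p (k + 1) = pfact p k * pnum p (k + 1) := by
  rw [pfact, Finset.prod_range_succ]; rfl

lemma pfact_ne_zero (hnum : ∀ m : ℕ, 1 ≤ m → pnum p m ≠ 0) (k : ℕ) : pfact p k ≠ 0 := by
  induction k with
  | zero => simp [pfact_zero]
  | succ k ih =>
      rw [pfact_succ]
      exact mul_ne_zero ih (hnum (k + 1) (by omega))

lemma pnum_succ (n : ℕ) : pnum p (n + 1) = pnum p n + p ^ n :=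
  Finset.sum_range_succ _ _

lemma pnum_add (m n : ℕ) : pnum p (m + n) = pnum p m + p ^ m * pnum p n := by
  induction n with
  | zero => simp [pnum]
  | succ n ih =>
      have h1 : m + (n + 1) = (m + n) + 1 := by omega
      rw [h1, pnum_succ, ih, pnum_succ, pow_add]
      ring

/-- `p`-binomial coefficient. -/
def Cb (p : F) (k j : ℕ) : F := if j ≤ k then pfact p k / (pfact p j * pfact p (k - j)) else 0

lemma Cb_zero (hnum : ∀ m : ℕ, 1 ≤ m → pnum p m ≠ 0) (k : ℕ) : Cb p k 0 = 1 := by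
  rw [Cb, if_pos (by omega : 0 ≤ k)]
  rw [pfact_zero, one_mul, Nat.sub_zero, div_self (pfact_ne_zero hnum k)]

lemma Cb_self (hnum : ∀ m : ℕ, 1 ≤ m → pnum p m ≠ 0) (k : ℕ) : Cb p k k = 1 := by
  rw [Cb, if_pos le_rfl, Nat.sub_self, pfact_zero, mul_one, div_self (pfact_ne_zero hnum k)]

lemma Cb_gt {k j : ℕ} (h : k < j) : Cb p k j = 0 := by
  rw [Cb, if_neg (by omega)]

lemma Cb_pascal (hnum : ∀ m : ℕ, 1 ≤ m → pnum p m ≠ 0) (k j : ℕ) (hj : 1 ≤ j) :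
    Cb p (k + 1) j = Cb p k j + p ^ (k + 1 - j) * Cb p k (j - 1) := by
  by_cases hjk : j ≤ k
  · obtain ⟨j', rfl⟩ : ∃ j', j = j' + 1 := ⟨j - 1, by omega⟩
    rw [Cb, if_pos (by omega), Cb, if_pos hjk, Cb, if_pos (by omega)]
    have h1 : k + 1 - (j' + 1) = (k - (j' + 1)) + 1 := by omega
    have h3 : j' + 1 - 1 = j' := by omega
    have h2 : k - j' = (k - (j' + 1)) + 1 := by omega
    rw [h1, h3, h2]
    set b := k - (j' + 1) with hb
    have e1 : pnum p (k + 1) = pnum p (b + 1) + p ^ (b + 1) * pnum p (j' + 1) := by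
      rw [← pnum_add]; congr 1; omega
    have n1 := pfact_ne_zero hnum j'
    have n3 := pfact_ne_zero hnum b
    have n4 := hnum (j' + 1) (by omega)
    have n5 := hnum (b + 1) (by omega)
    rw [pfact_succ k, e1, pfact_succ j', pfact_succ b]
    field_simp
  · by_cases hjk1 : j = k + 1
    · subst hjk1
      rw [Cb_self hnum, Cb_gt (by omega)]
      have h3 : k + 1 - 1 = k := by omega
      have h4 : k + 1 - (k + 1) = 0 := by omega
      rw [h3, h4, Cb_self hnum, pow_zero]
      ring
    · rw [Cb_gt (by omega), Cb_gt (by omega), Cb_gt (by omega : k < j - 1)]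
      ring

/-- Geometric series `Σ c^n X^n`. -/
def geomF (c : F) : PowerSeries F := PowerSeries.mk fun b => c ^ b

lemma geomF_inv (c : F) : (1 - PowerSeries.C (R := F) c * PowerSeries.X) * geomF c = 1 := by
  ext n
  rw [sub_mul, one_mul, map_sub, mul_assoc]
  rw [PowerSeries.coeff_C_mul]
  cases n with
  | zero => simp [geomF]
  | succ n =>
      rw [PowerSeries.coeff_one, if_neg (by omega)]
      have hX : (PowerSeries.X : PowerSeries F) * geomF c = PowerSeries.mk
          fun b => if b = 0 then 0 else c ^ (b - 1) := by
        ext m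
        cases m with
        | zero => simp [PowerSeries.coeff_zero_mul_X]
        | succ m =>
            have := PowerSeries.coeff_succ_X_mul m (geomF c)
            rw [this]
            simp [geomF]
      rw [hX]
      simp [geomF, pow_succ]
      ring

/-- `gps p k = ∏_{i=1}^{k} (1 - p^{i+1} z)^{-1}`. -/
def gps (p : F) (k : ℕ) : PowerSeries F := ∏ i ∈ Finset.Ico 1 (k + 1), geomF (p ^ (i + 1))

def gam (p : F) (k a : ℕ) : F := PowerSeries.coeff (R := F) a (gps p k)

lemma gps_zero : gps p 0 = 1 := by simp [gps]

lemma gps_succ (k : ℕ) : gps p (k + 1) = gps p k * geomF (p ^ (k + 2)) := by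
  rw [gps, Finset.prod_Ico_succ_top (by omega), ← gps]

lemma gam_zero (a : ℕ) : gam p 0 a = if a = 0 then 1 else 0 := by
  rw [gam, gps_zero, PowerSeries.coeff_one]

/-- The key `q`-binomial identity (finite `q`-binomial theorem in disguise). -/
lemma Elem (hnum : ∀ m : ℕ, 1 ≤ m → pnum p m ≠ 0) :
    ∀ (k : ℕ) (t : PowerSeries F),
      ∑ j ∈ Finset.range (k + 1),
        PowerSeries.C (R := F) (Cb p k j * p ^ (j * (j + 1))) * t ^ j *
          ∏ i ∈ Finset.Ico (j + 1) (k + 1), (1 - PowerSeries.C (R := F) (p ^ (i + 1)) * t)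
      = 1 := by
  intro k
  induction k with
  | zero =>
      intro t
      simp [Cb_zero hnum]
  | succ k ih =>
      intro t
      rw [Finset.sum_range_succ' _ (k + 1)]
      have hsplit : ∀ j ∈ Finset.range (k + 1),
          PowerSeries.C (R := F) (Cb p (k + 1) (j + 1) * p ^ ((j + 1) * (j + 2))) * t ^ (j + 1) *
            ∏ i ∈ Finset.Ico (j + 2) (k + 2), (1 - PowerSeries.C (R := F) (p ^ (i + 1)) * t)
          = (PowerSeries.C (R := F) (Cb p k (j + 1) * p ^ ((j + 1) * (j + 2))) * t ^ (j + 1) *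
              ∏ i ∈ Finset.Ico (j + 2) (k + 2), (1 - PowerSeries.C (R := F) (p ^ (i + 1)) * t))
            + (PowerSeries.C (R := F) (p ^ (k - j) * Cb p k j * p ^ ((j + 1) * (j + 2))) * t ^ (j + 1) *
              ∏ i ∈ Finset.Ico (j + 2) (k + 2), (1 - PowerSeries.C (R := F) (p ^ (i + 1)) * t)) := by
        intro j hj
        have hp := Cb_pascal hnum k (j + 1) (by omega)
        have h5 : k + 1 - (j + 1) = k - j := by omega
        have h6 : j + 1 - 1 = j := by omega
        rw [h5, h6] at hp
        rw [hp]
        rw [add_mul, map_add, add_mul, add_mul]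
        try ring
      rw [Finset.sum_congr rfl hsplit, Finset.sum_add_distrib]
      -- first sum + the j = 0 term gives u_{k+1} * E(k, t)
      have hA : (∑ j ∈ Finset.range (k + 1),
            PowerSeries.C (R := F) (Cb p k (j + 1) * p ^ ((j + 1) * (j + 2))) * t ^ (j + 1) *
              ∏ i ∈ Finset.Ico (j + 2) (k + 2), (1 - PowerSeries.C (R := F) (p ^ (i + 1)) * t))
          + PowerSeries.C (R := F) (Cb p (k + 1) 0 * p ^ (0 * (0 + 1))) * t ^ 0 *
              ∏ i ∈ Finset.Ico (0 + 1) (k + 2), (1 - PowerSeries.C (R := F) (p ^ (i + 1)) * t)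
          = 1 - PowerSeries.C (R := F) (p ^ (k + 2)) * t := by
        have h0 : Cb p (k + 1) 0 = Cb p k 0 := by
          rw [Cb_zero hnum, Cb_zero hnum]
        rw [h0]
        have hotimes : ∀ j, j ∈ Finset.range (k + 1) →
            PowerSeries.C (R := F) (Cb p k j * p ^ (j * (j + 1))) * t ^ j *
              ∏ i ∈ Finset.Ico (j + 1) (k + 2), (1 - PowerSeries.C (R := F) (p ^ (i + 1)) * t)
            = (PowerSeries.C (R := F) (Cb p k j * p ^ (j * (j + 1))) * t ^ j *
              ∏ i ∈ Finset.Ico (j + 1) (k + 1), (1 - PowerSeries.C (R := F) (p ^ (i + 1)) * t))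
              * (1 - PowerSeries.C (R := F) (p ^ (k + 2)) * t) := by
          intro j hj
          simp only [Finset.mem_range] at hj
          rw [Finset.prod_Ico_succ_top (by omega : j + 1 ≤ k + 1)]
          try ring
        calc (∑ j ∈ Finset.range (k + 1),
            PowerSeries.C (R := F) (Cb p k (j + 1) * p ^ ((j + 1) * (j + 2))) * t ^ (j + 1) *
              ∏ i ∈ Finset.Ico (j + 2) (k + 2), (1 - PowerSeries.C (R := F) (p ^ (i + 1)) * t))
          + PowerSeries.C (R := F) (Cb p k 0 * p ^ (0 * (0 + 1))) * t ^ 0 *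
              ∏ i ∈ Finset.Ico (0 + 1) (k + 2), (1 - PowerSeries.C (R := F) (p ^ (i + 1)) * t)
            = ∑ j ∈ Finset.range (k + 2),
                PowerSeries.C (R := F) (Cb p k j * p ^ (j * (j + 1))) * t ^ j *
                  ∏ i ∈ Finset.Ico (j + 1) (k + 2), (1 - PowerSeries.C (R := F) (p ^ (i + 1)) * t) := by
              rw [Finset.sum_range_succ' (fun j => PowerSeries.C (R := F) (Cb p k j * p ^ (j * (j + 1))) * t ^ j *
                  ∏ i ∈ Finset.Ico (j + 1) (k + 2), (1 - PowerSeries.C (R := F) (p ^ (i + 1)) * t)) (k + 1)]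
          _ = ∑ j ∈ Finset.range (k + 1),
                PowerSeries.C (R := F) (Cb p k j * p ^ (j * (j + 1))) * t ^ j *
                  ∏ i ∈ Finset.Ico (j + 1) (k + 2), (1 - PowerSeries.C (R := F) (p ^ (i + 1)) * t) := by
              rw [Finset.sum_range_succ]
              rw [Cb_gt (by omega : k < k + 1)]
              simp
          _ = (∑ j ∈ Finset.range (k + 1),
                PowerSeries.C (R := F) (Cb p k j * p ^ (j * (j + 1))) * t ^ j *
                  ∏ i ∈ Finset.Ico (j + 1) (k + 1), (1 - PowerSeries.C (R := F) (p ^ (i + 1)) * t))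
                * (1 - PowerSeries.C (R := F) (p ^ (k + 2)) * t) := by
              rw [Finset.sum_mul]
              exact Finset.sum_congr rfl hotimes
          _ = 1 - PowerSeries.C (R := F) (p ^ (k + 2)) * t := by rw [ih t, one_mul]
      have hB : (∑ j ∈ Finset.range (k + 1),
            PowerSeries.C (R := F) (p ^ (k - j) * Cb p k j * p ^ ((j + 1) * (j + 2))) * t ^ (j + 1) *
              ∏ i ∈ Finset.Ico (j + 2) (k + 2), (1 - PowerSeries.C (R := F) (p ^ (i + 1)) * t))
          = PowerSeries.C (R := F) (p ^ (k + 2)) * t := by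
        have hterm : ∀ j ∈ Finset.range (k + 1),
            PowerSeries.C (R := F) (p ^ (k - j) * Cb p k j * p ^ ((j + 1) * (j + 2))) * t ^ (j + 1) *
              ∏ i ∈ Finset.Ico (j + 2) (k + 2), (1 - PowerSeries.C (R := F) (p ^ (i + 1)) * t)
            = PowerSeries.C (R := F) (p ^ (k + 2)) * t *
              (PowerSeries.C (R := F) (Cb p k j * p ^ (j * (j + 1))) * (PowerSeries.C (R := F) p * t) ^ j *
                ∏ i ∈ Finset.Ico (j + 1) (k + 1),
                  (1 - PowerSeries.C (R := F) (p ^ (i + 1)) * (PowerSeries.C (R := F) p * t))) := by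
          intro j hj
          simp only [Finset.mem_range] at hj
          have hprod : ∏ i ∈ Finset.Ico (j + 1) (k + 1),
                (1 - PowerSeries.C (R := F) (p ^ (i + 1)) * (PowerSeries.C (R := F) p * t))
              = ∏ i ∈ Finset.Ico (j + 2) (k + 2), (1 - PowerSeries.C (R := F) (p ^ (i + 1)) * t) := by
            rw [Finset.prod_Ico_eq_prod_range, Finset.prod_Ico_eq_prod_range]
            have hc : k + 2 - (j + 2) = k + 1 - (j + 1) := by omega
            rw [hc]
            refine Finset.prod_congr rfl ?_
            intro i hi
            have hE : (PowerSeries.C (R := F) (p ^ (j + 1 + i + 1)) * (PowerSeries.C (R := F) p * t))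
                = PowerSeries.C (R := F) (p ^ (j + 2 + i + 1)) * t := by
              rw [← mul_assoc, ← map_mul, ← pow_succ]
              have h9 : j + 1 + i + 1 + 1 = j + 2 + i + 1 := by omega
              rw [h9]
            rw [hE]
          rw [hprod, mul_pow, ← map_pow]
          have hc : (PowerSeries.C (R := F)) (p ^ (k - j) * Cb p k j * p ^ ((j + 1) * (j + 2)))
              = PowerSeries.C (R := F) (p ^ (k + 2)) * PowerSeries.C (R := F) (Cb p k j * p ^ (j * (j + 1)))
                * PowerSeries.C (R := F) (p ^ j) := by
            rw [← map_mul, ← map_mul]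
            congr 1
            obtain ⟨c, rfl⟩ : ∃ c, k = j + c := ⟨k - j, by omega⟩
            have hs : j + c - j = c := by omega
            rw [hs]
            ring
          rw [hc]
          ring
        rw [Finset.sum_congr rfl hterm, ← Finset.mul_sum, ih (PowerSeries.C (R := F) p * t), mul_one]
      rw [hB, add_right_comm, hA]
      ring

lemma gps_eq (hnum : ∀ m : ℕ, 1 ≤ m → pnum p m ≠ 0) (k : ℕ) :
    ∑ j ∈ Finset.range (k + 1),
        PowerSeries.C (R := F) (Cb p k j * p ^ (j * (j + 1))) * PowerSeries.X ^ j * gps p j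
      = gps p k := by
  have h := Elem hnum k (PowerSeries.X : PowerSeries F)
  have h2 := congrArg (fun u => u * gps p k) h
  simp only [one_mul] at h2
  rw [← h2, Finset.sum_mul]
  refine Finset.sum_congr rfl ?_
  intro j hj
  simp only [Finset.mem_range] at hj
  have hsplit : gps p j * ∏ i ∈ Finset.Ico (j + 1) (k + 1), geomF (p ^ (i + 1)) = gps p k := by
    rw [gps, gps, Finset.prod_Ico_consecutive _ (by omega : 1 ≤ j + 1) (by omega : j + 1 ≤ k + 1)]
  have hone : (∏ i ∈ Finset.Ico (j + 1) (k + 1), (1 - PowerSeries.C (R := F) (p ^ (i + 1)) * PowerSeries.X))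
      * ∏ i ∈ Finset.Ico (j + 1) (k + 1), geomF (p ^ (i + 1)) = 1 := by
    rw [← Finset.prod_mul_distrib]
    refine Finset.prod_eq_one ?_
    intro i hi
    exact geomF_inv (p ^ (i + 1))
  calc PowerSeries.C (R := F) (Cb p k j * p ^ (j * (j + 1))) * PowerSeries.X ^ j * gps p j
      = PowerSeries.C (R := F) (Cb p k j * p ^ (j * (j + 1))) * PowerSeries.X ^ j *
        (gps p j * (((∏ i ∈ Finset.Ico (j + 1) (k + 1), (1 - PowerSeries.C (R := F) (p ^ (i + 1)) * PowerSeries.X))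
          * ∏ i ∈ Finset.Ico (j + 1) (k + 1), geomF (p ^ (i + 1))))) := by
        rw [hone, mul_one]
    _ = PowerSeries.C (R := F) (Cb p k j * p ^ (j * (j + 1))) * PowerSeries.X ^ j *
          (∏ i ∈ Finset.Ico (j + 1) (k + 1), (1 - PowerSeries.C (R := F) (p ^ (i + 1)) * PowerSeries.X))
          * (gps p j * ∏ i ∈ Finset.Ico (j + 1) (k + 1), geomF (p ^ (i + 1))) := by
        ring
    _ = _ := by rw [hsplit]

lemma gam_rec (hnum : ∀ m : ℕ, 1 ≤ m → pnum p m ≠ 0) (k a : ℕ) :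
    gam p k a = ∑ j ∈ Finset.range (k + 1),
      Cb p k j * p ^ (j * (j + 1)) * (if j ≤ a then gam p j (a - j) else 0) := by
  have h := congrArg (fun u => PowerSeries.coeff (R := F) a u) (gps_eq hnum k)
  simp only [map_sum] at h
  rw [gam, ← h]
  refine Finset.sum_congr rfl ?_
  intro j hj
  rw [mul_comm (PowerSeries.C (R := F) (Cb p k j * p ^ (j * (j + 1))) * PowerSeries.X ^ j) (gps p j),
    ← mul_assoc, PowerSeries.coeff_mul_X_pow', mul_comm (gps p j)]
  by_cases hja : j ≤ a
  · rw [if_pos hja, if_pos hja, PowerSeries.coeff_C_mul, gam]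
    try ring
  · rw [if_neg hja, if_neg hja, mul_zero]

end Scalar

section NC
variable {p : F} {x y : A}

lemma yb_x (hc : y * x = (p ^ 2) • (x * y)) (b : ℕ) :
    y ^ b * x = (p ^ (2 * b)) • (x * y ^ b) := by
  induction b with
  | zero => simp
  | succ b ih =>
      rw [pow_succ, mul_assoc, hc, mul_smul_comm, ← mul_assoc, ih, smul_mul_assoc,
        smul_smul, mul_assoc, ← pow_add]
      congr 2
      omega

lemma yx_pow (hc : y * x = (p ^ 2) • (x * y)) (m : ℕ) :
    (y * x) ^ m = (p ^ (m * (m + 1))) • (x ^ m * y ^ m) := by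
  induction m with
  | zero => simp
  | succ m ih =>
      rw [pow_succ, ih, smul_mul_assoc, mul_assoc, ← mul_assoc (y ^ m) y x, ← pow_succ,
        yb_x hc (m + 1), mul_smul_comm, smul_smul, ← mul_assoc, ← pow_succ, ← pow_add]
      congr 2
      ring

lemma coeff2_GIprod (k a m : ℕ) :
    coeff2 (((List.range k).map fun j => geomInv p y (j + 2)).prod) a m
      = if m = 0 then gam p k a • y ^ a else 0 := by
  induction k generalizing a m with
  | zero =>
      simp only [List.range_zero, List.map_nil, List.prod_nil]
      rw [coeff2_one, gam_zero]
      by_cases hm : m = 0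
      · subst hm
        by_cases ha : a = 0
        · subst ha; simp
        · simp [ha]
      · simp [hm]
  | succ k ih =>
      rw [List.range_succ, List.map_append, List.prod_append, List.map_cons, List.map_nil,
        List.prod_cons, List.prod_nil, mul_one]
      rw [coeff2_mul]
      by_cases hm : m = 0
      · subst hm
        rw [Finset.Nat.antidiagonal_zero, Finset.sum_singleton]
        have hterm : ∀ r ∈ Finset.HasAntidiagonal.antidiagonal a,
            coeff2 (((List.range k).map fun j => geomInv p y (j + 2)).prod) r.1 0 *
              coeff2 (geomInv p y (k + 2)) r.2 0
            = (gam p k r.1 * (p ^ (k + 2)) ^ r.2) • y ^ a := by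
          intro r hr
          have hra := Finset.HasAntidiagonal.mem_antidiagonal.mp hr
          rw [ih, coeff2_geomInv, if_pos rfl, if_pos rfl]
          rw [smul_mul_smul_comm, ← pow_add, hra, pow_mul]
        rw [Finset.sum_congr rfl hterm, ← Finset.sum_smul, if_pos rfl]
        congr 1
        rw [gam, gps_succ, PowerSeries.coeff_mul]
        refine Finset.sum_congr rfl ?_
        intro r hr
        rw [gam, geomF, PowerSeries.coeff_mk]
      · rw [if_neg hm]
        refine Finset.sum_eq_zero ?_
        intro q hq
        have hq' := Finset.HasAntidiagonal.mem_antidiagonal.mp hq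
        refine Finset.sum_eq_zero ?_
        intro r hr
        by_cases h1 : q.1 = 0
        · have h2 : q.2 ≠ 0 := by omega
          rw [coeff2_geomInv, if_neg h2, mul_zero]
        · rw [ih, if_neg h1, zero_mul]

lemma coeff2_qprod_k0 (p : F) (x y : A) (N a : ℕ) :
    coeff2 (((List.range N).map (qexpFactor p x y)).prod) a 0 = if a = 0 then 1 else 0 := by
  induction N generalizing a with
  | zero =>
      simp only [List.range_zero, List.map_nil, List.prod_nil]
      rw [coeff2_one]
      by_cases ha : a = 0 <;> simp [ha]
  | succ N ih =>
      rw [List.range_succ, List.map_append, List.prod_append, List.map_cons, List.map_nil,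
        List.prod_cons, List.prod_nil, mul_one, coeff2_mul]
      rw [Finset.Nat.antidiagonal_zero, Finset.sum_singleton]
      rw [sum_antidiag_snd _ 0 a]
      · simp only [Nat.zero_le, if_true, Nat.sub_zero]
        rw [ih, coeff2_qexp, if_pos (by omega : (0:ℕ) = N * 0)]
        simp [pfact_zero]
      · intro r hr hne
        rw [coeff2_qexp, if_neg (by omega), mul_zero]

lemma coeff2_qprod_cutoff (p : F) (x y : A) (N a k : ℕ) (h : a < N) :
    coeff2 (((List.range N).map (qexpFactor p x y)).prod) a k
      = coeff2 (((List.range (a + 1)).map (qexpFactor p x y)).prod) a k := by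
  induction N with
  | zero => omega
  | succ N ih =>
      by_cases hN : a < N
      · rw [← ih hN]
        rw [List.range_succ, List.map_append, List.prod_append, List.map_cons, List.map_nil,
          List.prod_cons, List.prod_nil, mul_one, coeff2_mul]
        have houter : ∀ q ∈ Finset.HasAntidiagonal.antidiagonal k,
            (∑ r ∈ Finset.HasAntidiagonal.antidiagonal a,
              coeff2 (((List.range N).map (qexpFactor p x y)).prod) r.1 q.1 *
                coeff2 (qexpFactor p x y N) r.2 q.2)
            = if q.2 = 0 then coeff2 (((List.range N).map (qexpFactor p x y)).prod) a q.1 else 0 := by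
          intro q hq
          by_cases hq2 : q.2 = 0
          · rw [if_pos hq2]
            rw [sum_antidiag_snd _ 0 a]
            · simp only [Nat.zero_le, if_true, Nat.sub_zero]
              rw [coeff2_qexp, hq2, if_pos (by omega : (0:ℕ) = N * 0)]
              simp [pfact_zero]
            · intro r hr hne
              rw [coeff2_qexp, hq2, if_neg (by omega), mul_zero]
          · rw [if_neg hq2]
            refine Finset.sum_eq_zero ?_
            intro r hr
            have hra := Finset.HasAntidiagonal.mem_antidiagonal.mp hr
            have : r.2 ≠ N * q.2 := by
              have h1 : r.2 ≤ a := by omega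
              have h2 : N ≤ N * q.2 := Nat.le_mul_of_pos_right N (by omega)
              omega
            rw [coeff2_qexp, if_neg (by omega), mul_zero]
        rw [Finset.sum_congr rfl houter]
        rw [sum_antidiag_snd _ 0 k]
        · simp
        · intro q hq hne
          rw [if_neg hne]
      · have : N = a := by omega
        subst this
        rfl

lemma coeff2_qprod_shift {p : F} {x y : A} :
    ∀ (N a k : ℕ),
      coeff2 (((List.range N).map (fun n => qexpFactor p x y (n + 1))).prod) a k
        = if k ≤ a then
            coeff2 (((List.range N).map (qexpFactor p (y * x) y)).prod) (a - k) k
          else 0 := by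
  intro N
  induction N with
  | zero =>
      intro a k
      simp only [List.range_zero, List.map_nil, List.prod_nil]
      rw [coeff2_one]
      by_cases hk : k ≤ a
      · rw [if_pos hk, coeff2_one]
        by_cases h0 : a = 0 ∧ k = 0
        · obtain ⟨rfl, rfl⟩ := h0; simp
        · rw [if_neg h0, if_neg (by omega)]
      · rw [if_neg hk, if_neg (by omega)]
  | succ N ih =>
      intro a k
      rw [List.range_succ, List.map_append, List.prod_append, List.map_cons, List.map_nil,
        List.prod_cons, List.prod_nil, mul_one, coeff2_mul]
      have hLHS : ∀ q ∈ Finset.HasAntidiagonal.antidiagonal k,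
          (∑ r ∈ Finset.HasAntidiagonal.antidiagonal a,
            coeff2 (((List.range N).map (fun n => qexpFactor p x y (n + 1))).prod) r.1 q.1 *
              coeff2 (qexpFactor p x y (N + 1)) r.2 q.2)
          = if (N + 1) * q.2 ≤ a then
              coeff2 (((List.range N).map (fun n => qexpFactor p x y (n + 1))).prod)
                (a - (N + 1) * q.2) q.1 *
                ((pfact p q.2)⁻¹ • (y ^ (N + 1) * x) ^ q.2)
            else 0 := by
        intro q hq
        rw [sum_antidiag_snd _ ((N + 1) * q.2) a]
        · by_cases hle : (N + 1) * q.2 ≤ a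
          · rw [if_pos hle, if_pos hle, coeff2_qexp, if_pos rfl]
          · rw [if_neg hle, if_neg hle]
        · intro r hr hne
          rw [coeff2_qexp, if_neg (by omega), mul_zero]
      rw [Finset.sum_congr rfl hLHS]
      by_cases hka : k ≤ a
      · rw [if_pos hka]
        rw [List.map_append, List.prod_append, List.map_cons, List.map_nil,
          List.prod_cons, List.prod_nil, mul_one, coeff2_mul]
        have hRHS : ∀ q ∈ Finset.HasAntidiagonal.antidiagonal k,
            (∑ r ∈ Finset.HasAntidiagonal.antidiagonal (a - k),
              coeff2 (((List.range N).map (qexpFactor p (y * x) y)).prod) r.1 q.1 *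
                coeff2 (qexpFactor p (y * x) y N) r.2 q.2)
            = if N * q.2 ≤ a - k then
                coeff2 (((List.range N).map (qexpFactor p (y * x) y)).prod)
                  (a - k - N * q.2) q.1 *
                  ((pfact p q.2)⁻¹ • (y ^ N * (y * x)) ^ q.2)
              else 0 := by
          intro q hq
          rw [sum_antidiag_snd _ (N * q.2) (a - k)]
          · by_cases hle : N * q.2 ≤ a - k
            · rw [if_pos hle, if_pos hle, coeff2_qexp, if_pos rfl]
            · rw [if_neg hle, if_neg hle]
          · intro r hr hne
            rw [coeff2_qexp, if_neg (by omega), mul_zero]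
        rw [Finset.sum_congr rfl hRHS]
        refine Finset.sum_congr rfl ?_
        intro q hq
        have hqk := Finset.HasAntidiagonal.mem_antidiagonal.mp hq
        have hyx : y ^ N * (y * x) = y ^ (N + 1) * x := by
          rw [← mul_assoc, ← pow_succ]
        rw [hyx]
        have hmul : (N + 1) * q.2 = N * q.2 + q.2 := by ring
        by_cases hle : (N + 1) * q.2 ≤ a
        · rw [if_pos hle, ih]
          by_cases hle2 : q.1 ≤ a - (N + 1) * q.2
          · rw [if_pos hle2, if_pos (by omega : N * q.2 ≤ a - k)]
            have harg : a - (N + 1) * q.2 - q.1 = a - k - N * q.2 := by omega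
            rw [harg]
          · rw [if_neg hle2, if_neg (by omega : ¬ N * q.2 ≤ a - k), zero_mul]
        · rw [if_neg hle, if_neg (by omega : ¬ N * q.2 ≤ a - k)]
      · rw [if_neg hka]
        refine Finset.sum_eq_zero ?_
        intro q hq
        have hqk := Finset.HasAntidiagonal.mem_antidiagonal.mp hq
        have hmul : (N + 1) * q.2 = N * q.2 + q.2 := by ring
        by_cases hle : (N + 1) * q.2 ≤ a
        · rw [if_pos hle, ih, if_neg (by omega : ¬ q.1 ≤ a - (N + 1) * q.2), zero_mul]
        · rw [if_neg hle]

lemma coeff2_rhs (p : F) (x y : A) (k a m : ℕ) :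
    coeff2 (rhsTermPlus p x y k) a m
      = if m = k then ((pfact p k)⁻¹ * gam p k a) • (x ^ k * y ^ a) else 0 := by
  rw [rhsTermPlus, coeff2_smul]
  have hmon : (MvPowerSeries.X (1 : Fin 2) : MvPowerSeries (Fin 2) A) ^ k *
      MvPowerSeries.C (σ := Fin 2) (R := A) (x ^ k) = MvPowerSeries.monomial (R := A) (D 0 k) (x ^ k) := by
    rw [MvPowerSeries.X_pow_eq]
    have : (MvPowerSeries.C (σ := Fin 2) (R := A)) (x ^ k) = MvPowerSeries.monomial (R := A) 0 (x ^ k) := rfl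
    rw [this, MvPowerSeries.monomial_mul_monomial, add_zero, one_mul]
    have he : (Finsupp.single (1 : Fin 2) k) = D 0 k := by
      ext i; fin_cases i <;> simp [D, Finsupp.single_apply]
    rw [he]
  rw [hmon, coeff2_mul]
  have houter : ∀ q ∈ Finset.HasAntidiagonal.antidiagonal m,
      (∑ r ∈ Finset.HasAntidiagonal.antidiagonal a,
        coeff2 (MvPowerSeries.monomial (R := A) (D 0 k) (x ^ k)) r.1 q.1 *
          coeff2 (((List.range k).map fun j => geomInv p y (j + 2)).prod) r.2 q.2)
      = if q.1 = k then x ^ k *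
          coeff2 (((List.range k).map fun j => geomInv p y (j + 2)).prod) a q.2 else 0 := by
    intro q hq
    have hcf : ∀ r1 k1, coeff2 (MvPowerSeries.monomial (R := A) (D 0 k) (x ^ k)) r1 k1
        = if r1 = 0 ∧ k1 = k then x ^ k else 0 := by
      intro r1 k1
      rw [coeff2, MvPowerSeries.coeff_monomial]
      by_cases h : r1 = 0 ∧ k1 = k
      · rw [if_pos (D_eq_iff.mpr h), if_pos h]
      · rw [if_neg (fun hD => h (D_eq_iff.mp hD)), if_neg h]
    rw [sum_antidiag_fst _ 0 a]
    · simp only [Nat.zero_le, if_true, Nat.sub_zero]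
      rw [hcf]
      by_cases hq1 : q.1 = k
      · rw [if_pos ⟨rfl, hq1⟩, if_pos hq1]
      · rw [if_neg (by tauto), if_neg hq1, zero_mul]
    · intro r hr hne
      rw [hcf, if_neg (by tauto), zero_mul]
  rw [Finset.sum_congr rfl houter, sum_antidiag_fst _ k m]
  · by_cases hkm : k ≤ m
    · rw [if_pos hkm, if_pos (rfl : (k, m - k).1 = k), coeff2_GIprod]
      by_cases hmk : m = k
      · subst hmk
        rw [if_pos (by omega : m - m = 0), if_pos rfl, mul_smul_comm, smul_smul]
      · rw [if_neg (by omega : ¬ m - k = 0), if_neg hmk, mul_zero, smul_zero]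
    · rw [if_neg hkm, if_neg (by omega : ¬ m = k), smul_zero]
  · intro q hq hne
    rw [if_neg hne]

lemma scalar_rec {p : F} (hnum : ∀ m : ℕ, 1 ≤ m → pnum p m ≠ 0) (k a : ℕ) :
    ∑ q ∈ Finset.HasAntidiagonal.antidiagonal k,
      (pfact p q.1)⁻¹ * (pfact p q.2)⁻¹ * p ^ (q.2 * (q.2 + 1)) *
        (if q.2 ≤ a then gam p q.2 (a - q.2) else 0)
    = (pfact p k)⁻¹ * gam p k a := by
  rw [Finset.Nat.sum_antidiagonal_eq_sum_range_succ_mk]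
  rw [← Finset.sum_range_reflect]
  rw [gam_rec hnum k a, Finset.mul_sum]
  refine Finset.sum_congr rfl ?_
  intro j hj
  simp only [Finset.mem_range] at hj
  have hj' : j ≤ k := by omega
  dsimp only
  have e1 : k + 1 - 1 - j = k - j := by omega
  rw [e1]
  have e2 : k - (k - j) = j := by omega
  rw [e2]
  have hCb : (pfact p k)⁻¹ * Cb p k j = (pfact p (k - j))⁻¹ * (pfact p j)⁻¹ := by
    rw [Cb, if_pos hj']
    have n1 := pfact_ne_zero hnum k
    have n2 := pfact_ne_zero hnum j
    have n3 := pfact_ne_zero hnum (k - j)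
    field_simp
  rw [← hCb]
  ring

lemma main_lemma {p : F} (hnum : ∀ m : ℕ, 1 ≤ m → pnum p m ≠ 0) (y : A) :
    ∀ a : ℕ, ∀ x : A, y * x = (p ^ 2) • (x * y) → ∀ k : ℕ,
      coeff2 (((List.range (a + 1)).map (qexpFactor p x y)).prod) a k
        = coeff2 (rhsTermPlus p x y k) a k := by
  intro a
  induction a using Nat.strong_induction_on with
  | _ a IH =>
    intro x hc k
    have hc' : y * (y * x) = (p ^ 2) • ((y * x) * y) := by
      conv_lhs => rw [hc, mul_smul_comm, ← mul_assoc]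
    rw [List.range_succ_eq_map, List.map_cons, List.prod_cons, List.map_map, coeff2_mul]
    have hstep : ∀ q ∈ Finset.HasAntidiagonal.antidiagonal k,
        (∑ r ∈ Finset.HasAntidiagonal.antidiagonal a,
          coeff2 (qexpFactor p x y 0) r.1 q.1 *
            coeff2 ((List.map (qexpFactor p x y ∘ Nat.succ) (List.range a)).prod) r.2 q.2)
        = (pfact p q.1)⁻¹ • x ^ q.1 *
            (if q.2 ≤ a then coeff2 (rhsTermPlus p (y * x) y q.2) (a - q.2) q.2 else 0) := by
      intro q hq
      have hqk := Finset.HasAntidiagonal.mem_antidiagonal.mp hq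
      have hmap : (List.map (qexpFactor p x y ∘ Nat.succ) (List.range a))
          = List.map (fun n => qexpFactor p x y (n + 1)) (List.range a) := by
        refine List.map_congr_left ?_
        intro n hn
        rfl
      rw [sum_antidiag_fst _ 0 a]
      · simp only [Nat.zero_le, if_true, Nat.sub_zero]
        rw [coeff2_qexp, if_pos (by omega : (0:ℕ) = 0 * q.1), pow_zero, one_mul]
        rw [hmap, coeff2_qprod_shift]
        congr 1
        by_cases hq2 : q.2 ≤ a
        · rw [if_pos hq2, if_pos hq2]
          by_cases hq20 : q.2 = 0
          · rw [hq20]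
            rw [Nat.sub_zero, coeff2_qprod_k0, coeff2_rhs, if_pos rfl]
            rw [pfact_zero, inv_one, one_mul, gam_zero, pow_zero, one_mul]
            by_cases ha : a = 0
            · subst ha; simp
            · rw [if_neg ha, if_neg ha, zero_smul]
          · have hlt : a - q.2 < a := by omega
            rw [coeff2_qprod_cutoff p (y * x) y a (a - q.2) q.2 hlt]
            exact IH (a - q.2) hlt (y * x) hc' q.2
        · rw [if_neg hq2, if_neg hq2]
      · intro r hr hne
        rw [coeff2_qexp, if_neg (by omega : ¬ r.1 = 0 * q.1), zero_mul]
    rw [Finset.sum_congr rfl hstep]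
    -- now compute the right-hand side
    rw [coeff2_rhs, if_pos rfl]
    have hterm : ∀ q ∈ Finset.HasAntidiagonal.antidiagonal k,
        (pfact p q.1)⁻¹ • x ^ q.1 *
            (if q.2 ≤ a then coeff2 (rhsTermPlus p (y * x) y q.2) (a - q.2) q.2 else 0)
        = ((pfact p q.1)⁻¹ * (pfact p q.2)⁻¹ * p ^ (q.2 * (q.2 + 1)) *
            (if q.2 ≤ a then gam p q.2 (a - q.2) else 0)) • (x ^ k * y ^ a) := by
      intro q hq
      have hqk := Finset.HasAntidiagonal.mem_antidiagonal.mp hq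
      rw [coeff2_rhs, if_pos rfl]
      by_cases hq2 : q.2 ≤ a
      · rw [if_pos hq2, if_pos hq2, yx_pow hc q.2]
        simp only [smul_mul_assoc, mul_smul_comm, smul_smul]
        have hxy : x ^ q.1 * (x ^ q.2 * y ^ q.2 * y ^ (a - q.2)) = x ^ k * y ^ a := by
          rw [mul_assoc (x ^ q.2) (y ^ q.2), ← pow_add y, ← mul_assoc (x ^ q.1), ← pow_add x, hqk]
          have he : q.2 + (a - q.2) = a := by omega
          rw [he]
        rw [hxy]
        congr 1
        ring
      · rw [if_neg hq2, if_neg hq2, mul_zero, mul_zero, zero_smul]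
    rw [Finset.sum_congr rfl hterm, ← Finset.sum_smul, scalar_rec hnum k a]

end NC
end GaussAux

/-- Closed form of the upper-triangular Gauss factor `R⁺`: if `y x = p² x y`, then
in `A[[z, ζ]]`,
`∏_{n=0}^{∞,→} exp_p(ζ z^n y^n x)
  = Σ_{k≥0} (ζ^k/(k)_p!) x^k ∏_{j=1}^{k} (1 − p^{j+1} z y)^{−1}`.
The infinite ordered product (left-to-right, increasing `n`) and the infinite sum
are given coefficientwise: the `n`-th factor is `1 + O(z^n)` for `n ≥ 1`, so the
coefficient at bidegree `d` is that of the partial product over `n ≤ d 0`; the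
`k`-th summand has `ζ`-degree exactly `k`. -/
theorem gauss_factor_plus_closed_form (p : F) (hp : p ≠ 0)
    (hnum : ∀ m : ℕ, 1 ≤ m → pnum p m ≠ 0) (x y : A)
    (hcomm : y * x = (p ^ 2) • (x * y)) :
    (fun d => MvPowerSeries.coeff (R := A) d
        (((List.range (d 0 + 1)).map (qexpFactor p x y)).prod) :
      MvPowerSeries (Fin 2) A)
    = fun d => MvPowerSeries.coeff (R := A) d (rhsTermPlus p x y (d 1)) := by
  funext d
  have hL : MvPowerSeries.coeff (R := A) d (((List.range (d 0 + 1)).map (qexpFactor p x y)).prod)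
      = GaussAux.coeff2 (((List.range (d 0 + 1)).map (qexpFactor p x y)).prod) (d 0) (d 1) := by
    rw [GaussAux.coeff2, GaussAux.D_eta]
  have hR : MvPowerSeries.coeff (R := A) d (rhsTermPlus p x y (d 1))
      = GaussAux.coeff2 (rhsTermPlus p x y (d 1)) (d 0) (d 1) := by
    rw [GaussAux.coeff2, GaussAux.D_eta]
  rw [hL, hR]
  exact GaussAux.main_lemma hnum y (d 0) x hcomm (d 1)
end
end

section
/- Let q be a nonzero complex number that is not a root of unity and let N, M, i, j be natural numbers. Then both of the following formal power series in ℂ[[z]] are Taylor expansions at z = 0 of rational functions of z: (i) exp( Σ_{n≥1} (z^n/n) [ (q^{−Nn} − q^{(2i−N)n}) q^{−n} [Mn]_q/[n]_q + q^n ([Nn]_q/[n]_q) (q^{(M−2j)n} − q^{Mn}) ] ) and (ii) exp( Σ_{n≥1} (z^n/n) (q^{−Nn} − q^{(2i−N)n})(q^{(M−2j)n} − q^{Mn}) (q^n + q^{−n})/(q^n − q^{−n}) ). (These are the diagonal matrix entries of the factors R^{(′)} and R^{(″)} of the diagonal Gauss component of the trigonometric R-matrix on the tensor product of modules with integer highest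 weights N and M; for noninteger highest weights these entries are no longer rational and are expressed through infinite products (z;q)_∞.) -/
noncomputable section

/-- The formal exponential of a power series (intended for series with zero
constant term): `exp S = Σ_k S^k/k!`, whose `z^m`-coefficient only involves
`k ≤ m` when `S` has zero constant term. -/
def expPS (S : PowerSeries ℂ) : PowerSeries ℂ :=
  PowerSeries.mk fun m =>
    ∑ k ∈ Finset.range (m + 1), ((k.factorial : ℂ))⁻¹ * PowerSeries.coeff m (S ^ k)

/-- A formal power series is the Taylor expansion at `0` of a rational function of `z`:
there are polynomials `f`, `g` with `g(0) ≠ 0` and `g · S = f`. -/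
def IsRationalPS (S : PowerSeries ℂ) : Prop :=
  ∃ f g : Polynomial ℂ, g.coeff 0 ≠ 0 ∧ (g : PowerSeries ℂ) * S = (f : PowerSeries ℂ)

open PowerSeries

namespace RatAux

lemma coeff_pow_eq_zero {S : ℂ⟦X⟧} (hS : constantCoeff S = 0) {k m : ℕ} (h : m < k) :
    coeff m (S ^ k) = 0 := by
  have h1 : (X : ℂ⟦X⟧) ∣ S := X_dvd_iff.mpr hS
  exact X_pow_dvd_iff.mp (pow_dvd_pow_of_dvd h1 k) m h

lemma coeff_expPS (S : ℂ⟦X⟧) (m : ℕ) :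
    coeff m (expPS S) =
      ∑ k ∈ Finset.range (m + 1), ((k.factorial : ℂ))⁻¹ * coeff m (S ^ k) := by
  simp [expPS]

lemma constantCoeff_expPS (S : ℂ⟦X⟧) : constantCoeff (expPS S) = 1 := by
  rw [← coeff_zero_eq_constantCoeff_apply, coeff_expPS]; simp

lemma coeff_expPS' {S : ℂ⟦X⟧} (hS : constantCoeff S = 0) (m K : ℕ) (hK : m < K) :
    coeff m (expPS S) =
      ∑ k ∈ Finset.range K, ((k.factorial : ℂ))⁻¹ * coeff m (S ^ k) := by
  rw [coeff_expPS]
  refine Finset.sum_subset (Finset.range_subset_range.mpr hK) ?_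
  intro k _ hk
  rw [coeff_pow_eq_zero hS (by simpa using hk), mul_zero]

lemma derivative_expPS {S : ℂ⟦X⟧} (hS : constantCoeff S = 0) :
    d⁄dX ℂ (expPS S) = expPS S * d⁄dX ℂ S := by
  ext m
  rw [coeff_derivative, coeff_expPS' hS (m+1) (m+2) (by omega), Finset.sum_mul,
    Finset.sum_range_succ']
  have key : ∀ k : ℕ, ((k+1).factorial : ℂ)⁻¹ * coeff (m + 1) (S ^ (k+1)) * (m + 1 : ℂ) =
      (k.factorial : ℂ)⁻¹ *
        ∑ p ∈ Finset.HasAntidiagonal.antidiagonal m, coeff p.1 (S ^ k) * coeff p.2 (d⁄dX ℂ S) := by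
    intro k
    have hd : coeff (m+1) (S ^ (k+1)) * (m+1 : ℂ) = coeff m (d⁄dX ℂ (S ^ (k+1))) := by
      rw [coeff_derivative]
    have hl : d⁄dX ℂ (S ^ (k+1)) = (k+1 : ℕ) • (S ^ k * d⁄dX ℂ S) := by
      have := Derivation.leibniz_pow (d⁄dX ℂ) S (k+1)
      simpa [smul_smul, mul_comm, smul_eq_mul] using this
    rw [mul_assoc, hd, hl, map_nsmul, nsmul_eq_mul, coeff_mul]
    rw [← mul_assoc]
    congr 1
    rw [Nat.factorial_succ]
    have h1 : (k:ℂ)+1 ≠ 0 := Nat.cast_add_one_ne_zero k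
    push_cast
    rw [mul_inv, mul_assoc, mul_comm ((k.factorial:ℂ))⁻¹ ((k:ℂ)+1), ← mul_assoc, inv_mul_cancel₀ h1, one_mul]
  simp only [key]
  rw [coeff_mul]
  have hz : coeff (m+1) ((S:ℂ⟦X⟧) ^ 0) = 0 := by simp
  rw [hz]
  simp only [mul_zero, zero_mul, add_zero, Finset.mul_sum]
  rw [Finset.sum_comm]
  refine Finset.sum_congr rfl fun p hp => ?_
  rw [coeff_expPS' hS p.1 (m+1) (Nat.lt_succ_of_le (Finset.HasAntidiagonal.antidiagonal.fst_le hp)),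
    Finset.sum_mul]
  exact Finset.sum_congr rfl fun k _ => by ring

lemma ode_unique {u x y : ℂ⟦X⟧} (hx : d⁄dX ℂ x = x * u) (hy : d⁄dX ℂ y = y * u)
    (h0 : constantCoeff x = constantCoeff y) : x = y := by
  ext m
  induction m using Nat.strong_induction_on with
  | _ m ih =>
    match m with
    | 0 => simpa [coeff_zero_eq_constantCoeff_apply] using h0
    | m+1 =>
      have hx' := congrArg (coeff m) hx
      have hy' := congrArg (coeff m) hy
      rw [coeff_derivative, coeff_mul] at hx' hy'
      have hsum : ∑ p ∈ Finset.HasAntidiagonal.antidiagonal m, coeff p.1 x * coeff p.2 u =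
          ∑ p ∈ Finset.HasAntidiagonal.antidiagonal m, coeff p.1 y * coeff p.2 u := by
        refine Finset.sum_congr rfl fun p hp => ?_
        rw [ih p.1 (Nat.lt_succ_of_le (Finset.HasAntidiagonal.antidiagonal.fst_le hp))]
      have : coeff (m+1) x * (m+1 : ℂ) = coeff (m+1) y * (m+1 : ℂ) := by
        rw [hx', hy', hsum]
      have hm : ((m : ℂ) + 1) ≠ 0 := Nat.cast_add_one_ne_zero m
      exact mul_right_cancel₀ hm this

def T (t : ℂ) : ℂ⟦X⟧ := PowerSeries.mk fun n => t ^ (n+1)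

def U (l : List ℂ) : ℂ⟦X⟧ := (l.map T).sum

def G (l : List ℂ) : ℂ⟦X⟧ := (l.map (fun t => 1 - C t * X)).prod

lemma G_nil : G [] = 1 := by simp [G]
lemma G_cons (t : ℂ) (l : List ℂ) : G (t :: l) = (1 - C t * X) * G l := by
  simp [G]
lemma U_cons (t : ℂ) (l : List ℂ) : U (t :: l) = T t + U l := by simp [U]

lemma T_mul (t : ℂ) : T t * (1 - C t * X) = C t := by
  have h : T t * (1 - C t * X) = T t - C t * (T t * X) := by ring
  rw [h]
  ext n
  cases n with
  | zero => simp [T, coeff_zero_mul_X]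
  | succ n =>
      rw [map_sub, coeff_C_mul, coeff_succ_mul_X]
      simp [T, coeff_C, pow_succ, mul_comm]

lemma constantCoeff_G (l : List ℂ) : constantCoeff (G l) = 1 := by
  induction l with
  | nil => simp [G]
  | cons t l ih =>
      rw [G_cons, map_mul, ih, mul_one]
      simp

lemma derivative_G (l : List ℂ) : d⁄dX ℂ (G l) = -(U l) * G l := by
  induction l with
  | nil => simp [G, U]
  | cons t l ih =>
      rw [G_cons, U_cons, Derivation.leibniz]
      have hd1 : d⁄dX ℂ (1 - C t * X) = -(C t) := by
        rw [map_sub, Derivation.leibniz]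
        simp
      rw [hd1, ih, smul_eq_mul, smul_eq_mul]
      linear_combination (G l) * (T_mul t)

lemma coeff_U (l : List ℂ) (b : ℕ) : coeff b (U l) = (l.map (· ^ (b+1))).sum := by
  induction l with
  | nil => simp [U]
  | cons t l ih => simp [U, List.map_cons, List.sum_cons, T, coeff_mk] at ih ⊢; exact ih

lemma coe_GP (l : List ℂ) :
    (((l.map (fun t => 1 - Polynomial.C t * Polynomial.X)).prod : Polynomial ℂ) : ℂ⟦X⟧) = G l := by
  induction l with
  | nil => rw [List.map_nil, List.prod_nil, Polynomial.coe_one, G_nil]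
  | cons t l ih =>
      rw [List.map_cons, List.prod_cons, Polynomial.coe_mul, ih, G_cons]
      congr 1
      rw [← Polynomial.coeToPowerSeries.ringHom_apply, map_sub, map_one, map_mul,
        Polynomial.coeToPowerSeries.ringHom_apply, Polynomial.coeToPowerSeries.ringHom_apply,
        Polynomial.coe_C, Polynomial.coe_X]

lemma main_list (lp lm : List ℂ) (S : ℂ⟦X⟧)
    (h0 : constantCoeff S = 0)
    (hc : ∀ n : ℕ, 0 < n →
      coeff n S = ((lp.map (· ^ n)).sum - (lm.map (· ^ n)).sum) / n) :
    IsRationalPS (expPS S) := by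
  have hu : d⁄dX ℂ S = U lp - U lm := by
    ext b
    rw [coeff_derivative, hc (b+1) b.succ_pos, map_sub, coeff_U, coeff_U]
    have hb : ((b:ℂ)+1) ≠ 0 := Nat.cast_add_one_ne_zero b
    push_cast
    field_simp
  set g := G lp with hgdef
  set f := G lm with hfdef
  have hg1 : constantCoeff g = 1 := constantCoeff_G lp
  have hgne : constantCoeff g ≠ 0 := by rw [hg1]; exact one_ne_zero
  have hginv : g * g⁻¹ = 1 := PowerSeries.mul_inv_cancel g hgne
  have hdginv : d⁄dX ℂ g⁻¹ = U lp * g⁻¹ := by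
    have h1 : (0 : ℂ⟦X⟧) = g * d⁄dX ℂ g⁻¹ + g⁻¹ * d⁄dX ℂ g := by
      have := congrArg (d⁄dX ℂ) hginv
      rw [Derivation.leibniz, smul_eq_mul, smul_eq_mul] at this
      simpa using this.symm
    have h2 : g * d⁄dX ℂ g⁻¹ = U lp := by
      have h3 : g⁻¹ * d⁄dX ℂ g = -(U lp) := by
        rw [derivative_G, hgdef]
        calc (G lp)⁻¹ * (-U lp * G lp) = -(U lp) * (G lp * (G lp)⁻¹) := by ring
          _ = -(U lp) := by rw [hginv]; ring
      have h4 := h1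
      rw [h3] at h4
      linear_combination -h4
    calc d⁄dX ℂ g⁻¹ = (g⁻¹ * g) * d⁄dX ℂ g⁻¹ := by rw [mul_comm g⁻¹ g, hginv, one_mul]
      _ = g⁻¹ * (g * d⁄dX ℂ g⁻¹) := by ring
      _ = U lp * g⁻¹ := by rw [h2]; ring
  set F := f * g⁻¹ with hFdef
  have hdF : d⁄dX ℂ F = F * (U lp - U lm) := by
    rw [hFdef, Derivation.leibniz, smul_eq_mul, smul_eq_mul, hdginv, derivative_G]
    ring
  have hdE : d⁄dX ℂ (expPS S) = expPS S * (U lp - U lm) := by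
    rw [derivative_expPS h0, hu]
  have hcF : constantCoeff F = 1 := by
    rw [hFdef, map_mul, PowerSeries.constantCoeff_inv, hg1, constantCoeff_G]
    simp
  have hEF : expPS S = F := ode_unique hdE hdF (by rw [constantCoeff_expPS, hcF])
  refine ⟨(lm.map (fun t => 1 - Polynomial.C t * Polynomial.X)).prod,
    (lp.map (fun t => 1 - Polynomial.C t * Polynomial.X)).prod, ?_, ?_⟩
  · have h5 : ((lp.map (fun t => 1 - Polynomial.C t * Polynomial.X)).prod).coeff 0
        = constantCoeff (G lp) := by
      rw [← coe_GP, Polynomial.constantCoeff_coe]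
    rw [h5, constantCoeff_G]
    exact one_ne_zero
  · rw [coe_GP, coe_GP, hEF, hFdef, ← hgdef, ← hfdef]
    linear_combination f * hginv

lemma list_range_map_sum (f : ℕ → ℂ) (K : ℕ) :
    ((List.range K).map f).sum = ∑ r ∈ Finset.range K, f r := by
  induction K with
  | zero => simp
  | succ K ih =>
      rw [List.range_succ, List.map_append, List.sum_append, Finset.sum_range_succ, ih]
      simp

lemma geomA (x : ℂ) (hx : x ≠ 0) (c : ℤ) (M : ℕ) :
    (x - x⁻¹) * ∑ r ∈ Finset.range M, x ^ (c + 2*(r:ℤ)) = x ^ (c + 2*M - 1) - x ^ (c - 1) := by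
  induction M with
  | zero => simp
  | succ M ih =>
      rw [Finset.sum_range_succ, mul_add, ih]
      have ha : (x - x⁻¹) * x ^ (c + 2*(M:ℤ)) = x ^ (c + 2*M + 1) - x ^ (c + 2*M - 1) := by
        rw [sub_mul, zpow_add_one₀ hx, zpow_sub_one₀ hx]
        ring
      rw [ha, show c + 2*(((M+1 : ℕ)) : ℤ) - 1 = c + 2*(M:ℤ) + 1 by push_cast; ring]
      ring

lemma mulA (x : ℂ) (hx : x ≠ 0) (A B C D E : ℤ) (h1 : A + -1 + C = D) (h2 : B + -1 + C = E) :
    (x ^ A - x ^ B) * x⁻¹ * x ^ C = x ^ D - x ^ E := by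
  rw [← h1, ← h2, zpow_add₀ hx, zpow_add₀ hx, zpow_add₀ hx, zpow_add₀ hx, zpow_neg_one]
  ring

lemma mulB (x : ℂ) (hx : x ≠ 0) (A B C D E : ℤ) (h1 : 1 + C + A = D) (h2 : 1 + C + B = E) :
    x * x ^ C * (x ^ A - x ^ B) = x ^ D - x ^ E := by
  rw [← h1, ← h2, zpow_add₀ hx, zpow_add₀ hx, zpow_add₀ hx, zpow_add₀ hx, zpow_one]
  ring

lemma mulC (x : ℂ) (hx : x ≠ 0) (A B C e1 e2 e3 e4 : ℤ)
    (h1 : C + B + 1 = e1) (h2 : C + B + -1 = e2) (h3 : C + A + 1 = e3) (h4 : C + A + -1 = e4) :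
    -(x ^ C * (x ^ A - x ^ B) * (x + x⁻¹)) = x ^ e1 + x ^ e2 - (x ^ e3 + x ^ e4) := by
  rw [← h1, ← h2, ← h3, ← h4]
  simp only [zpow_add₀ hx, zpow_one, zpow_neg_one]
  ring

end RatAux

/-- The diagonal matrix entries of the factors `R^{(′)}` and `R^{(″)}` of the
diagonal Gauss component of the trigonometric R-matrix on the tensor product of
modules with integer highest weights `N` and `M` are rational functions of `z`:
(i) `exp( Σ_{n≥1} (z^n/n) [ (q^{−Nn} − q^{(2i−N)n}) q^{−n} [Mn]_q/[n]_q
       + q^n ([Nn]_q/[n]_q) (q^{(M−2j)n} − q^{Mn}) ] )` and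
(ii) `exp( Σ_{n≥1} (z^n/n) (q^{−Nn} − q^{(2i−N)n})(q^{(M−2j)n} − q^{Mn})
       (q^n + q^{−n})/(q^n − q^{−n}) )`
are Taylor expansions at `z = 0` of rational functions. -/
theorem diagonal_factors_rational (q : ℂ) (hq : q ≠ 0)
    (hroot : ∀ n : ℕ, 0 < n → q ^ n ≠ 1) (N M i j : ℕ) :
    IsRationalPS (expPS (PowerSeries.mk fun n =>
      if n = 0 then 0 else
        ((q ^ (-(N : ℤ) * (n : ℤ)) - q ^ ((2 * (i : ℤ) - (N : ℤ)) * (n : ℤ))) * q ^ (-(n : ℤ)) *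
            ((q ^ ((M : ℤ) * (n : ℤ)) - q ^ (-(M : ℤ) * (n : ℤ))) /
              (q ^ (n : ℤ) - q ^ (-(n : ℤ))))
          + q ^ (n : ℤ) *
            ((q ^ ((N : ℤ) * (n : ℤ)) - q ^ (-(N : ℤ) * (n : ℤ))) /
              (q ^ (n : ℤ) - q ^ (-(n : ℤ)))) *
            (q ^ (((M : ℤ) - 2 * (j : ℤ)) * (n : ℤ)) - q ^ ((M : ℤ) * (n : ℤ)))) / (n : ℂ))) ∧
    IsRationalPS (expPS (PowerSeries.mk fun n =>
      if n = 0 then 0 else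
        ((q ^ (-(N : ℤ) * (n : ℤ)) - q ^ ((2 * (i : ℤ) - (N : ℤ)) * (n : ℤ))) *
            (q ^ (((M : ℤ) - 2 * (j : ℤ)) * (n : ℤ)) - q ^ ((M : ℤ) * (n : ℤ))) *
            ((q ^ (n : ℤ) + q ^ (-(n : ℤ))) / (q ^ (n : ℤ) - q ^ (-(n : ℤ))))) / (n : ℂ))) := by
  have hx : ∀ n : ℕ, q ^ (n:ℤ) ≠ 0 := fun n => zpow_ne_zero _ hq
  have hxx : ∀ n : ℕ, 0 < n → q ^ (n:ℤ) - (q ^ (n:ℤ))⁻¹ ≠ 0 := by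
    intro n hn h
    have h2 : q ^ (n:ℤ) = (q ^ (n:ℤ))⁻¹ := sub_eq_zero.mp h
    have h1 : q ^ (n:ℤ) * q ^ (n:ℤ) = 1 := by
      calc q ^ (n:ℤ) * q ^ (n:ℤ) = q ^ (n:ℤ) * (q ^ (n:ℤ))⁻¹ := by rw [← h2]
        _ = 1 := mul_inv_cancel₀ (hx n)
    have h3 : q ^ (2*n) = 1 := by
      rw [← zpow_natCast q (2*n)]
      rw [show ((2*n : ℕ) : ℤ) = (n:ℤ) + (n:ℤ) by push_cast; ring, zpow_add₀ hq]
      exact h1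
    exact hroot (2*n) (by omega) h3
  have hgeom : ∀ n : ℕ, 0 < n → ∀ K : ℕ,
      ((q ^ (n:ℤ)) ^ (K:ℤ) - (q ^ (n:ℤ)) ^ (-(K:ℤ))) / (q ^ (n:ℤ) - (q ^ (n:ℤ))⁻¹)
        = ∑ r ∈ Finset.range K, (q ^ (n:ℤ)) ^ (1 - (K:ℤ) + 2*(r:ℤ)) := by
    intro n hn K
    rw [div_eq_iff (hxx n hn)]
    have h := RatAux.geomA (q ^ (n:ℤ)) (hx n) (1 - (K:ℤ)) K
    rw [show 1 - (K:ℤ) + 2*K - 1 = (K:ℤ) by ring, show 1 - (K:ℤ) - 1 = -(K:ℤ) by ring] at h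
    linear_combination -h
  have hside : ∀ (n : ℕ) (c : ℕ → ℤ) (K : ℕ),
      (((List.range K).map (fun r => q ^ (c r))).map (· ^ n)).sum
        = ∑ r ∈ Finset.range K, (q ^ (n:ℤ)) ^ (c r) := by
    intro n c K
    rw [List.map_map, RatAux.list_range_map_sum]
    refine Finset.sum_congr rfl fun r _ => ?_
    show (q ^ (c r)) ^ n = (q ^ (n:ℤ)) ^ (c r)
    rw [← zpow_natCast (q ^ (c r)) n, ← zpow_mul, mul_comm, zpow_mul]
  have hc : ∀ (n : ℕ) (c : ℤ), q ^ (c * (n:ℤ)) = (q ^ (n:ℤ)) ^ c := by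
    intro n c; rw [mul_comm, zpow_mul]
  have hneg : ∀ n : ℕ, q ^ (-(n:ℤ)) = (q ^ (n:ℤ))⁻¹ := by
    intro n; rw [zpow_neg]
  constructor
  · apply RatAux.main_list
      ((List.range M).map (fun r : ℕ => q ^ (-(N:ℤ) - M + 2*(r:ℤ))) ++
       (List.range N).map (fun r : ℕ => q ^ (2 - (N:ℤ) + 2*(r:ℤ) + M - 2*(j:ℤ))))
      ((List.range M).map (fun r : ℕ => q ^ (2*(i:ℤ) - N - M + 2*(r:ℤ))) ++
       (List.range N).map (fun r : ℕ => q ^ (2 - (N:ℤ) + 2*(r:ℤ) + M)))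
    · rw [← PowerSeries.coeff_zero_eq_constantCoeff_apply, PowerSeries.coeff_mk]; simp
    · intro n hn
      rw [PowerSeries.coeff_mk, if_neg hn.ne']
      rw [List.map_append, List.sum_append, List.map_append, List.sum_append,
        hside n _ M, hside n _ N, hside n _ M, hside n _ N]
      refine congrArg (· / (n:ℂ)) ?_
      set x := q ^ (n:ℤ) with hxdef
      simp only [hc n, hneg n]
      rw [hgeom n hn M, hgeom n hn N]
      rw [Finset.mul_sum, Finset.mul_sum, Finset.sum_mul]
      rw [show ∀ a b c d : ℂ, (a+b)-(c+d) = (a-c)+(b-d) from fun a b c d => by ring]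
      rw [← Finset.sum_sub_distrib, ← Finset.sum_sub_distrib]
      congr 1
      · refine Finset.sum_congr rfl fun r _ => ?_
        exact RatAux.mulA x (hx n) _ _ _ _ _ (by ring) (by ring)
      · refine Finset.sum_congr rfl fun r _ => ?_
        exact RatAux.mulB x (hx n) _ _ _ _ _ (by ring) (by ring)
  · apply RatAux.main_list
      ((List.range i).map (fun r : ℕ => q ^ (2 - (N:ℤ) + 2*(r:ℤ) + M)) ++
       (List.range i).map (fun r : ℕ => q ^ (-(N:ℤ) + 2*(r:ℤ) + M)))
      ((List.range i).map (fun r : ℕ => q ^ (2 - (N:ℤ) + 2*(r:ℤ) + M - 2*(j:ℤ))) ++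
       (List.range i).map (fun r : ℕ => q ^ (-(N:ℤ) + 2*(r:ℤ) + M - 2*(j:ℤ))))
    · rw [← PowerSeries.coeff_zero_eq_constantCoeff_apply, PowerSeries.coeff_mk]; simp
    · intro n hn
      rw [PowerSeries.coeff_mk, if_neg hn.ne']
      rw [List.map_append, List.sum_append, List.map_append, List.sum_append,
        hside n _ i, hside n _ i, hside n _ i, hside n _ i]
      refine congrArg (· / (n:ℂ)) ?_
      set x := q ^ (n:ℤ) with hxdef
      simp only [hc n, hneg n]
      have hA : x ^ (-(N:ℤ)) - x ^ (2*(i:ℤ) - N)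
          = -((x - x⁻¹) * ∑ r ∈ Finset.range i, x ^ (1 - (N:ℤ) + 2*(r:ℤ))) := by
        have h := RatAux.geomA x (hx n) (1 - (N:ℤ)) i
        rw [show 1 - (N:ℤ) + 2*i - 1 = 2*(i:ℤ) - N by ring,
          show 1 - (N:ℤ) - 1 = -(N:ℤ) by ring] at h
        linear_combination h
      rw [hA]
      calc -((x - x⁻¹) * ∑ r ∈ Finset.range i, x ^ (1 - (N:ℤ) + 2*(r:ℤ)))
            * (x ^ ((M:ℤ) - 2*j) - x ^ (M:ℤ)) * ((x + x⁻¹)/(x - x⁻¹))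
          = -((∑ r ∈ Finset.range i, x ^ (1 - (N:ℤ) + 2*(r:ℤ)))
              * (x ^ ((M:ℤ) - 2*j) - x ^ (M:ℤ)) * (x + x⁻¹))
              * ((x - x⁻¹) * (x - x⁻¹)⁻¹) := by rw [div_eq_mul_inv]; ring
        _ = -((∑ r ∈ Finset.range i, x ^ (1 - (N:ℤ) + 2*(r:ℤ)))
              * (x ^ ((M:ℤ) - 2*j) - x ^ (M:ℤ)) * (x + x⁻¹)) := by
            rw [mul_inv_cancel₀ (hxx n hn), mul_one]
        _ = ∑ r ∈ Finset.range i,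
              -(x ^ (1 - (N:ℤ) + 2*(r:ℤ)) * (x ^ ((M:ℤ) - 2*j) - x ^ (M:ℤ)) * (x + x⁻¹)) := by
            rw [Finset.sum_mul, Finset.sum_mul, ← Finset.sum_neg_distrib]
        _ = ∑ r ∈ Finset.range i,
              (x ^ (2 - (N:ℤ) + 2*(r:ℤ) + M) + x ^ (-(N:ℤ) + 2*(r:ℤ) + M)
                - (x ^ (2 - (N:ℤ) + 2*(r:ℤ) + M - 2*(j:ℤ)) + x ^ (-(N:ℤ) + 2*(r:ℤ) + M - 2*(j:ℤ)))) := by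
            refine Finset.sum_congr rfl fun r _ => ?_
            exact RatAux.mulC x (hx n) _ _ _ _ _ _ _ (by ring) (by ring) (by ring) (by ring)
        _ = (∑ r ∈ Finset.range i, x ^ (2 - (N:ℤ) + 2*(r:ℤ) + M))
              + (∑ r ∈ Finset.range i, x ^ (-(N:ℤ) + 2*(r:ℤ) + M))
              - ((∑ r ∈ Finset.range i, x ^ (2 - (N:ℤ) + 2*(r:ℤ) + M - 2*(j:ℤ)))
              + (∑ r ∈ Finset.range i, x ^ (-(N:ℤ) + 2*(r:ℤ) + M - 2*(j:ℤ)))) := by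
            rw [← Finset.sum_add_distrib, ← Finset.sum_add_distrib, ← Finset.sum_sub_distrib]
end
end
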